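/- arXiv:2605.26654 — 8 statements merged into one kernel-verified Lean document; each statement's English description precedes it below -/
import Mathlib

section
/- Suppose for every min-player profile y and max-player profile z there is a function V(y,z) : S → ℝ that is a fixed point of the soft min–max Bellman operator, i.e. T_{y,z,h}(V(y,z)) = V(y,z). Let ρ ∈ Δ(S) satisfy ρ s > 0 for all s, and write V(y,z)(ρ) = ∑_{s} ρ s · V(y,z)(s). Then there exists a unique pair of profiles (y*, z*) such that V(y*, z)(ρ) ≤ V(y*, z*)(ρ) ≤ V(y, z*)(ρ) for all profiles y and z; moreover V(y*, z*)(ρ) = ⨅_{y} ⨆_{z} V(y,z)(ρ) = ⨆_{z} ⨅_{y} V(y,z)(ρ), where the infimum and supremum range over all min-player and max-player profiles respectively. -/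
/-!
At a fixed state the stage game `u, w ↦ uᵀ Q_V w + h_s u w` is continuous and convex–concave on
a product of simplices, so it has a saddle point by Sion's theorem. Saddle values of two games
differ by at most the sup-distance of the payoffs, so the Shapley operator sending `V` to the
state-wise saddle values is a `γ`-contraction; its fixed point `V₀` is attained by profiles
`(y₀, z₀)`. Each `T_{y,z,h}` is monotone and a `γ`-contraction, so by a comparison principle
`V(y₀, z) ≤ V₀ ≤ V(y, z₀)` state by state. For another equilibrium `(y, z)`, averaging against
`ρ > 0` forces `V(y, z₀) = V₀ = V(y₀, z)`, so `y s` and `z s` are again optimal in the stage game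
at `V₀`, and strict convexity–concavity makes them unique. The minimax identities hold at any
saddle point of a bounded payoff, and comparison with constants bounds `V`.
-/

open scoped BigOperators

noncomputable section

variable {S A B : Type*} [Fintype S] [Fintype A] [Fintype B]

/-- Regularized Q-value. -/
def QV (r : S → A → B → ℝ) (P : S → A → B → S → ℝ) (γ : ℝ)
    (V : S → ℝ) (s : S) (a : A) (b : B) : ℝ :=
  r s a b + γ * ∑ s', P s a b s' * V s'

/-- Min–max Bellman operator for a fixed policy pair. -/
def Tyz (r : S → A → B → ℝ) (P : S → A → B → S → ℝ) (γ : ℝ)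
    (y : S → A → ℝ) (z : S → B → ℝ) (V : S → ℝ) (s : S) : ℝ :=
  ∑ a, ∑ b, y s a * z s b * QV r P γ V s a b

/-- Soft min–max Bellman operator. -/
def Tsoft (r : S → A → B → ℝ) (P : S → A → B → S → ℝ) (γ : ℝ)
    (h : S → (A → ℝ) → (B → ℝ) → ℝ)
    (y : S → A → ℝ) (z : S → B → ℝ) (V : S → ℝ) (s : S) : ℝ :=
  Tyz r P γ y z V s + h s (y s) (z s)

/-- Min-player profiles: a mixed strategy at each state. -/
def MinProf (S A : Type*) [Fintype A] : Type _ :=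
  {y : S → A → ℝ // ∀ s, y s ∈ stdSimplex ℝ A}

/-- Max-player profiles: a mixed strategy at each state. -/
def MaxProf (S B : Type*) [Fintype B] : Type _ :=
  {z : S → B → ℝ // ∀ s, z s ∈ stdSimplex ℝ B}

open Finset

lemma sum_mul_le_sum_mul {ι : Type*} [Fintype ι] {ρ f g : ι → ℝ} (hρ : ∀ i, 0 ≤ ρ i)
    (hfg : ∀ i, f i ≤ g i) : ∑ i, ρ i * f i ≤ ∑ i, ρ i * g i :=
  sum_le_sum fun i _ => mul_le_mul_of_nonneg_left (hfg i) (hρ i)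

lemma eq_of_le_of_sum_mul_le {ι : Type*} [Fintype ι] {ρ f g : ι → ℝ} (hρ : ∀ i, 0 < ρ i)
    (hfg : ∀ i, f i ≤ g i) (hsum : ∑ i, ρ i * g i ≤ ∑ i, ρ i * f i) : f = g := funext fun i =>
  mul_left_cancel₀ (hρ i).ne' <| (sum_eq_sum_iff_of_le fun i _ =>
    mul_le_mul_of_nonneg_left (hfg i) (hρ i).le).1
      (le_antisymm (sum_mul_le_sum_mul (fun i => (hρ i).le) hfg) hsum) i (mem_univ i)

lemma eq_and_eq_of_forall_sum_mul_saddle {ι κ σ : Type*} [Fintype σ] {F : ι → κ → σ → ℝ}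
    {ρ : σ → ℝ} (hρ : ∀ s, 0 < ρ s) {i₀ i : ι} {j₀ j : κ} {v : σ → ℝ}
    (hle : ∀ j s, F i₀ j s ≤ v s) (hge : ∀ i s, v s ≤ F i j₀ s)
    (hsad : ∀ i' j', ∑ s, ρ s * F i j' s ≤ ∑ s, ρ s * F i j s ∧
      ∑ s, ρ s * F i j s ≤ ∑ s, ρ s * F i' j s) :
    F i j₀ = v ∧ F i₀ j = v := by
  have hρ' s := (hρ s).le
  have hchain := (hsad i₀ j₀).1.trans (hsad i₀ j).2
  exact ⟨(eq_of_le_of_sum_mul_le hρ (hge i)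
      (by linarith [sum_mul_le_sum_mul hρ' (hle j)])).symm,
    eq_of_le_of_sum_mul_le hρ (hle j) (by linarith [sum_mul_le_sum_mul hρ' (hge i)])⟩

lemma eq_ciInf_ciSup_and_eq_ciSup_ciInf {ι κ : Type*} {F : ι → κ → ℝ}
    (hA : ∀ i, BddAbove (Set.range (F i))) (hB : ∀ j, BddBelow (Set.range fun i => F i j))
    {i₀ : ι} {j₀ : κ} (h : ∀ i j, F i₀ j ≤ F i₀ j₀ ∧ F i₀ j₀ ≤ F i j₀) :
    F i₀ j₀ = ⨅ i, ⨆ j, F i j ∧ F i₀ j₀ = ⨆ j, ⨅ i, F i j := by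
  have : Nonempty ι := ⟨i₀⟩
  have : Nonempty κ := ⟨j₀⟩
  have hsup : ∀ i, F i₀ j₀ ≤ ⨆ j, F i j := fun i => (h i j₀).2.trans (le_ciSup (hA i) j₀)
  have hinf : ∀ j, ⨅ i, F i j ≤ F i₀ j₀ := fun j => (ciInf_le (hB j) i₀).trans (h i₀ j).1
  constructor
  · exact le_antisymm (le_ciInf hsup)
      ((ciInf_le ⟨_, Set.forall_mem_range.2 hsup⟩ i₀).trans (ciSup_le fun j => (h i₀ j).1))
  · exact le_antisymm ((le_ciInf fun i => (h i j₀).2).trans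
      (le_ciSup ⟨_, Set.forall_mem_range.2 hinf⟩ j₀)) (ciSup_le hinf)

section SaddlePoint

variable {E F : Type*} {X : Set E} {Y : Set F} {f g : E → F → ℝ} {a a' : E} {b b' : F}

lemma IsSaddlePointOn.sub_le (hf : IsSaddlePointOn X Y f a b) (hg : IsSaddlePointOn X Y g a' b')
    (ha' : a' ∈ X) (hb : b ∈ Y) {c : ℝ} (hfg : ∀ x ∈ X, ∀ y ∈ Y, f x y - g x y ≤ c) :
    f a b - g a' b' ≤ c := by
  linarith [hf a' ha' b hb, hg a' ha' b hb, hfg a' ha' b hb]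

lemma IsSaddlePointOn.eq_left_of_apply_eq [AddCommMonoid E] [Module ℝ E]
    (hf : IsSaddlePointOn X Y f a b) (hstrict : StrictConvexOn ℝ X (f · b)) (ha : a ∈ X)
    (hb : b ∈ Y) (ha' : a' ∈ X) (heq : f a' b = f a b) : a' = a :=
  hstrict.eq_of_isMinOn (isMinOn_iff.2 fun x hx => heq ▸ hf x hx b hb)
    (isMinOn_iff.2 fun x hx => hf x hx b hb) ha' ha

lemma IsSaddlePointOn.eq_right_of_apply_eq [AddCommMonoid F] [Module ℝ F]
    (hf : IsSaddlePointOn X Y f a b) (hstrict : StrictConcaveOn ℝ Y (f a)) (ha : a ∈ X)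
    (hb : b ∈ Y) (hb' : b' ∈ Y) (heq : f a b' = f a b) : b' = b :=
  hstrict.eq_of_isMaxOn (isMaxOn_iff.2 fun y hy => heq ▸ hf a ha y hy)
    (isMaxOn_iff.2 fun y hy => hf a ha y hy) hb' hb

end SaddlePoint

lemma le_of_forall_sub_le_map_sub {ι : Type*} [Finite ι] {T : (ι → ℝ) → ι → ℝ} {γ : ℝ}
    (hγ : γ < 1) (hT : ∀ X Y d, (∀ i, X i - Y i ≤ d) → ∀ i, T X i - T Y i ≤ γ * d)
    {X Y : ι → ℝ} (hXY : ∀ i, X i - Y i ≤ T X i - T Y i) (i : ι) : X i ≤ Y i := by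
  have : Nonempty ι := ⟨i⟩
  obtain ⟨i₀, hi₀⟩ := Finite.exists_max fun i => X i - Y i
  have : X i₀ - Y i₀ ≤ γ * (X i₀ - Y i₀) := (hXY i₀).trans (hT X Y _ hi₀ i₀)
  have : X i₀ - Y i₀ ≤ 0 := by nlinarith
  linarith [hi₀ i]

lemma sum_sum_mul_eq_toLinearMap₂' [DecidableEq A] [DecidableEq B] (M : A → B → ℝ)
    (u : A → ℝ) (w : B → ℝ) :
    ∑ a, ∑ b, u a * w b * M a b = Matrix.toLinearMap₂' ℝ (Matrix.of M) u w := by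
  simp only [Matrix.toLinearMap₂'_apply, Matrix.of_apply, smul_eq_mul]
  exact sum_congr rfl fun a _ => sum_congr rfl fun b _ => by ring

section StageGame

variable (r : S → A → B → ℝ) (P : S → A → B → S → ℝ) (γ : ℝ)
  (h : S → (A → ℝ) → (B → ℝ) → ℝ)

def stageGame (V : S → ℝ) (s : S) (u : A → ℝ) (w : B → ℝ) : ℝ :=
  ∑ a, ∑ b, u a * w b * QV r P γ V s a b + h s u w

lemma Tsoft_apply (y : S → A → ℝ) (z : S → B → ℝ) (V : S → ℝ) (s : S) :
    Tsoft r P γ h y z V s = stageGame r P γ h V s (y s) (z s) := rfl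

variable {r P γ h}

lemma continuous_stageGame {s : S} (hcont : Continuous fun p : (A → ℝ) × (B → ℝ) => h s p.1 p.2)
    (V : S → ℝ) :
    Continuous fun p : (A → ℝ) × (B → ℝ) => stageGame r P γ h V s p.1 p.2 := by
  unfold stageGame
  fun_prop

lemma convexOn_stageGame {s : S} {w : B → ℝ}
    (hconv : ConvexOn ℝ (stdSimplex ℝ A) fun u => h s u w) (V : S → ℝ) :
    ConvexOn ℝ (stdSimplex ℝ A) fun u => stageGame r P γ h V s u w := by
  classical
  simp only [stageGame, sum_sum_mul_eq_toLinearMap₂']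
  exact (((Matrix.toLinearMap₂' ℝ _).flip w).convexOn (convex_stdSimplex ℝ A)).add hconv

lemma strictConvexOn_stageGame {s : S} {w : B → ℝ}
    (hconv : StrictConvexOn ℝ (stdSimplex ℝ A) fun u => h s u w) (V : S → ℝ) :
    StrictConvexOn ℝ (stdSimplex ℝ A) fun u => stageGame r P γ h V s u w := by
  classical
  simp only [stageGame, sum_sum_mul_eq_toLinearMap₂']
  exact (((Matrix.toLinearMap₂' ℝ _).flip w).convexOn (convex_stdSimplex ℝ A)).add_strictConvexOn
    hconv

lemma concaveOn_stageGame {s : S} {u : A → ℝ}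
    (hconc : ConcaveOn ℝ (stdSimplex ℝ B) fun w => h s u w) (V : S → ℝ) :
    ConcaveOn ℝ (stdSimplex ℝ B) fun w => stageGame r P γ h V s u w := by
  classical
  simp only [stageGame, sum_sum_mul_eq_toLinearMap₂']
  exact ((Matrix.toLinearMap₂' ℝ _ u).concaveOn (convex_stdSimplex ℝ B)).add hconc

lemma strictConcaveOn_stageGame {s : S} {u : A → ℝ}
    (hconc : StrictConcaveOn ℝ (stdSimplex ℝ B) fun w => h s u w) (V : S → ℝ) :
    StrictConcaveOn ℝ (stdSimplex ℝ B) fun w => stageGame r P γ h V s u w := by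
  classical
  simp only [stageGame, sum_sum_mul_eq_toLinearMap₂']
  exact ((Matrix.toLinearMap₂' ℝ _ u).concaveOn (convex_stdSimplex ℝ B)).add_strictConcaveOn hconc

lemma exists_isSaddlePointOn_stageGame [Nonempty A] [Nonempty B] {s : S}
    (hcont : Continuous fun p : (A → ℝ) × (B → ℝ) => h s p.1 p.2)
    (hconv : ∀ w ∈ stdSimplex ℝ B, ConvexOn ℝ (stdSimplex ℝ A) fun u => h s u w)
    (hconc : ∀ u ∈ stdSimplex ℝ A, ConcaveOn ℝ (stdSimplex ℝ B) fun w => h s u w) (V : S → ℝ) :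
    ∃ u ∈ stdSimplex ℝ A, ∃ w ∈ stdSimplex ℝ B,
      IsSaddlePointOn (stdSimplex ℝ A) (stdSimplex ℝ B) (stageGame r P γ h V s) u w := by
  classical
  have hG := continuous_stageGame (r := r) (P := P) (γ := γ) hcont V
  exact Sion.exists_isSaddlePointOn ⟨_, single_mem_stdSimplex ℝ (Classical.arbitrary A)⟩
    (convex_stdSimplex ℝ A) (isCompact_stdSimplex ℝ A)
    (fun w _ => (hG.comp (.prodMk_left w)).continuousOn.lowerSemicontinuousOn)
    (fun w hw => (convexOn_stageGame (hconv w hw) V).quasiconvexOn)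
    (convex_stdSimplex ℝ B) ⟨_, single_mem_stdSimplex ℝ (Classical.arbitrary B)⟩
    (isCompact_stdSimplex ℝ B)
    (fun u _ => (hG.comp (.prodMk_right u)).continuousOn.upperSemicontinuousOn)
    (fun u hu => (concaveOn_stageGame (hconc u hu) V).quasiconcaveOn)

lemma stageGame_sub_le (hP0 : ∀ s a b s', 0 ≤ P s a b s') (hP1 : ∀ s a b, ∑ s', P s a b s' = 1)
    (hγ : 0 ≤ γ) {u : A → ℝ} {w : B → ℝ} (hu : u ∈ stdSimplex ℝ A) (hw : w ∈ stdSimplex ℝ B)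
    {V W : S → ℝ} {d : ℝ} (hVW : ∀ s', V s' - W s' ≤ d) (s : S) :
    stageGame r P γ h V s u w - stageGame r P γ h W s u w ≤ γ * d := by
  have hQ : ∀ a b, QV r P γ V s a b - QV r P γ W s a b ≤ γ * d := fun a b => by
    have : ∑ s', P s a b s' * V s' - ∑ s', P s a b s' * W s' ≤ d := calc
      _ = ∑ s', P s a b s' * (V s' - W s') := by simp only [mul_sub, sum_sub_distrib]
      _ ≤ ∑ s', P s a b s' * d := sum_le_sum fun s' _ => mul_le_mul_of_nonneg_left (hVW s') (hP0 ..)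
      _ = d := by rw [← sum_mul, hP1, one_mul]
    simp only [QV]
    linarith [mul_le_mul_of_nonneg_left this hγ]
  calc stageGame r P γ h V s u w - stageGame r P γ h W s u w
      = ∑ a, ∑ b, u a * w b * (QV r P γ V s a b - QV r P γ W s a b) := by
        simp only [stageGame, mul_sub, sum_sub_distrib]; ring
    _ ≤ ∑ a, ∑ b, u a * w b * (γ * d) := sum_le_sum fun a _ => sum_le_sum fun b _ =>
        mul_le_mul_of_nonneg_left (hQ a b) (mul_nonneg (hu.1 a) (hw.1 b))
    _ = γ * d := by simp only [← sum_mul, ← mul_sum, hu.2, hw.2, mul_one, one_mul]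

end StageGame

section Profiles

variable {r : S → A → B → ℝ} {P : S → A → B → S → ℝ} {γ : ℝ} {h : S → (A → ℝ) → (B → ℝ) → ℝ}

theorem exists_isFixedPt_Tsoft_isSaddlePointOn [Nonempty A] [Nonempty B]
    (hP0 : ∀ s a b s', 0 ≤ P s a b s') (hP1 : ∀ s a b, ∑ s', P s a b s' = 1)
    (hγ0 : 0 ≤ γ) (hγ1 : γ < 1)
    (hcont : ∀ s, Continuous fun p : (A → ℝ) × (B → ℝ) => h s p.1 p.2)
    (hconv : ∀ s, ∀ w ∈ stdSimplex ℝ B, ConvexOn ℝ (stdSimplex ℝ A) fun u => h s u w)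
    (hconc : ∀ s, ∀ u ∈ stdSimplex ℝ A, ConcaveOn ℝ (stdSimplex ℝ B) fun w => h s u w) :
    ∃ (V₀ : S → ℝ) (y₀ : MinProf S A) (z₀ : MaxProf S B), Tsoft r P γ h y₀.1 z₀.1 V₀ = V₀ ∧
      ∀ s, IsSaddlePointOn (stdSimplex ℝ A) (stdSimplex ℝ B) (stageGame r P γ h V₀ s)
        (y₀.1 s) (z₀.1 s) := by
  choose u hu w hw hsad using fun V s =>
    exists_isSaddlePointOn_stageGame (r := r) (P := P) (γ := γ) (hcont s) (hconv s) (hconc s) V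
  let Φ : (S → ℝ) → S → ℝ := fun V s => stageGame r P γ h V s (u V s) (w V s)
  have hsub : ∀ V W : S → ℝ, ∀ s, Φ V s - Φ W s ≤ γ * dist V W := fun V W s =>
    (hsad V s).sub_le (hsad W s) (hu W s) (hw V s) fun x hx y hy =>
      stageGame_sub_le hP0 hP1 hγ0 hx hy (fun s' => (le_abs_self _).trans
        (Real.dist_eq (V s') (W s') ▸ dist_le_pi_dist V W s')) s
  have hΦ : ContractingWith ⟨γ, hγ0⟩ Φ := by
    refine ⟨by exact_mod_cast hγ1, LipschitzWith.of_dist_le_mul fun V W => ?_⟩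
    refine (dist_pi_le_iff (by positivity)).2 fun s => ?_
    rw [Real.dist_eq, abs_sub_le_iff]
    exact ⟨hsub V W s, dist_comm V W ▸ hsub W V s⟩
  set V₀ := ContractingWith.fixedPoint Φ hΦ
  exact ⟨V₀, ⟨u V₀, hu V₀⟩, ⟨w V₀, hw V₀⟩, hΦ.fixedPoint_isFixedPt, hsad V₀⟩

lemma Tsoft_sub_le (hP0 : ∀ s a b s', 0 ≤ P s a b s') (hP1 : ∀ s a b, ∑ s', P s a b s' = 1)
    (hγ0 : 0 ≤ γ) (y : MinProf S A) (z : MaxProf S B) (X Y : S → ℝ) (d : ℝ)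
    (hXY : ∀ s, X s - Y s ≤ d) (s : S) :
    Tsoft r P γ h y.1 z.1 X s - Tsoft r P γ h y.1 z.1 Y s ≤ γ * d := by
  rw [Tsoft_apply, Tsoft_apply]
  exact stageGame_sub_le hP0 hP1 hγ0 (y.2 s) (z.2 s) hXY s

lemma le_of_isFixedPt_Tsoft_of_Tsoft_le (hP0 : ∀ s a b s', 0 ≤ P s a b s')
    (hP1 : ∀ s a b, ∑ s', P s a b s' = 1) (hγ0 : 0 ≤ γ) (hγ1 : γ < 1) {y : MinProf S A}
    {z : MaxProf S B} {X Y : S → ℝ} (hX : Tsoft r P γ h y.1 z.1 X = X)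
    (hY : ∀ s, Tsoft r P γ h y.1 z.1 Y s ≤ Y s) (s : S) : X s ≤ Y s :=
  le_of_forall_sub_le_map_sub hγ1 (Tsoft_sub_le hP0 hP1 hγ0 y z)
    (fun s => by linarith [congrFun hX s, hY s]) s

lemma le_of_le_Tsoft_of_isFixedPt_Tsoft (hP0 : ∀ s a b s', 0 ≤ P s a b s')
    (hP1 : ∀ s a b, ∑ s', P s a b s' = 1) (hγ0 : 0 ≤ γ) (hγ1 : γ < 1) {y : MinProf S A}
    {z : MaxProf S B} {X Y : S → ℝ} (hX : ∀ s, X s ≤ Tsoft r P γ h y.1 z.1 X s)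
    (hY : Tsoft r P γ h y.1 z.1 Y = Y) (s : S) : X s ≤ Y s :=
  le_of_forall_sub_le_map_sub hγ1 (Tsoft_sub_le hP0 hP1 hγ0 y z)
    (fun s => by linarith [congrFun hY s, hX s]) s

lemma exists_forall_abs_le_of_isFixedPt_Tsoft (hP0 : ∀ s a b s', 0 ≤ P s a b s')
    (hP1 : ∀ s a b, ∑ s', P s a b s' = 1) (hγ0 : 0 ≤ γ) (hγ1 : γ < 1)
    (hcont : ∀ s, Continuous fun p : (A → ℝ) × (B → ℝ) => h s p.1 p.2) :
    ∃ C, ∀ (y : MinProf S A) (z : MaxProf S B) (X : S → ℝ),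
      Tsoft r P γ h y.1 z.1 X = X → ∀ s, |X s| ≤ C := by
  obtain ⟨M, hM⟩ : ∃ M, ∀ (y : MinProf S A) (z : MaxProf S B) s,
      |Tsoft r P γ h y.1 z.1 0 s| ≤ M := by
    choose M hM using fun s => ((isCompact_stdSimplex ℝ A).prod
      (isCompact_stdSimplex ℝ B)).exists_bound_of_continuousOn
        (continuous_stageGame (r := r) (P := P) (γ := γ) (hcont s) 0).continuousOn
    obtain ⟨M', hM'⟩ := (Set.finite_range M).bddAbove
    exact ⟨M', fun y z s => (hM s (y.1 s, z.1 s) ⟨y.2 s, z.2 s⟩).trans (hM' ⟨s, rfl⟩)⟩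
  -- the constants `±M / (1 - γ)` are a super- and a subsolution of every `Tsoft`
  have hC : M / (1 - γ) = M + γ * (M / (1 - γ)) := by
    field_simp [(sub_pos.2 hγ1).ne']
    ring
  refine ⟨M / (1 - γ), fun y z X hX s => abs_le.2 ⟨?_, ?_⟩⟩
  · refine le_of_le_Tsoft_of_isFixedPt_Tsoft hP0 hP1 hγ0 hγ1 (X := fun _ => _) (fun s => ?_) hX s
    have := Tsoft_sub_le (r := r) (h := h) hP0 hP1 hγ0 y z 0 (fun _ => -(M / (1 - γ))) (M / (1 - γ))
      (fun _ => by simp) s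
    linarith [(abs_le.1 (hM y z s)).1]
  · refine le_of_isFixedPt_Tsoft_of_Tsoft_le hP0 hP1 hγ0 hγ1 (Y := fun _ => _) hX (fun s => ?_) s
    have := Tsoft_sub_le (r := r) (h := h) hP0 hP1 hγ0 y z (fun _ => M / (1 - γ)) 0 (M / (1 - γ))
      (fun _ => by simp) s
    linarith [(abs_le.1 (hM y z s)).2]

lemma MinProf.eq_of_isSaddlePointOn {V₀ : S → ℝ} {y₀ y : MinProf S A} {z₀ : MaxProf S B}
    (hsad : ∀ s, IsSaddlePointOn (stdSimplex ℝ A) (stdSimplex ℝ B) (stageGame r P γ h V₀ s)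
      (y₀.1 s) (z₀.1 s))
    (hstrict : ∀ s, StrictConvexOn ℝ (stdSimplex ℝ A) fun u => h s u (z₀.1 s))
    (hV₀ : Tsoft r P γ h y₀.1 z₀.1 V₀ = V₀) (hy : Tsoft r P γ h y.1 z₀.1 V₀ = V₀) : y = y₀ :=
  Subtype.ext <| funext fun s => (hsad s).eq_left_of_apply_eq
    (strictConvexOn_stageGame (hstrict s) V₀) (y₀.2 s) (z₀.2 s) (y.2 s)
    ((congrFun hy s).trans (congrFun hV₀ s).symm)

lemma MaxProf.eq_of_isSaddlePointOn {V₀ : S → ℝ} {y₀ : MinProf S A} {z₀ z : MaxProf S B}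
    (hsad : ∀ s, IsSaddlePointOn (stdSimplex ℝ A) (stdSimplex ℝ B) (stageGame r P γ h V₀ s)
      (y₀.1 s) (z₀.1 s))
    (hstrict : ∀ s, StrictConcaveOn ℝ (stdSimplex ℝ B) fun w => h s (y₀.1 s) w)
    (hV₀ : Tsoft r P γ h y₀.1 z₀.1 V₀ = V₀) (hz : Tsoft r P γ h y₀.1 z.1 V₀ = V₀) : z = z₀ :=
  Subtype.ext <| funext fun s => (hsad s).eq_right_of_apply_eq
    (strictConcaveOn_stageGame (hstrict s) V₀) (y₀.2 s) (z₀.2 s) (z.2 s)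
    ((congrFun hz s).trans (congrFun hV₀ s).symm)

end Profiles

theorem unique_equilibrium_of_regularized_game_general
    [Nonempty A] [Nonempty B]
    (r : S → A → B → ℝ) (P : S → A → B → S → ℝ)
    (hP0 : ∀ s a b s', 0 ≤ P s a b s')
    (hP1 : ∀ s a b, ∑ s', P s a b s' = 1)
    (γ : ℝ) (hγ0 : 0 < γ) (hγ1 : γ < 1)
    (h : S → (A → ℝ) → (B → ℝ) → ℝ)
    (hcont : ∀ s, Continuous (fun p : (A → ℝ) × (B → ℝ) => h s p.1 p.2))
    (μ₁ μ₂ : ℝ) (hμ₁ : 0 < μ₁) (hμ₂ : 0 < μ₂)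
    (hconv : ∀ s, ∀ w ∈ stdSimplex ℝ B,
      StrongConvexOn (stdSimplex ℝ A) μ₁ (fun u => h s u w))
    (hconc : ∀ s, ∀ u ∈ stdSimplex ℝ A,
      StrongConcaveOn (stdSimplex ℝ B) μ₂ (fun w => h s u w))
    (V : MinProf S A → MaxProf S B → S → ℝ)
    (hfix : ∀ y z, Tsoft r P γ h y.1 z.1 (V y z) = V y z)
    (ρ : S → ℝ) (hρpos : ∀ s, 0 < ρ s) :
    (∃! p : MinProf S A × MaxProf S B,
      ∀ (y : MinProf S A) (z : MaxProf S B),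
        (∑ s, ρ s * V p.1 z s) ≤ (∑ s, ρ s * V p.1 p.2 s) ∧
        (∑ s, ρ s * V p.1 p.2 s) ≤ (∑ s, ρ s * V y p.2 s)) ∧
    (∀ p : MinProf S A × MaxProf S B,
      (∀ (y : MinProf S A) (z : MaxProf S B),
        (∑ s, ρ s * V p.1 z s) ≤ (∑ s, ρ s * V p.1 p.2 s) ∧
        (∑ s, ρ s * V p.1 p.2 s) ≤ (∑ s, ρ s * V y p.2 s)) →
      (∑ s, ρ s * V p.1 p.2 s)
          = (⨅ y : MinProf S A, ⨆ z : MaxProf S B, ∑ s, ρ s * V y z s) ∧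
      (∑ s, ρ s * V p.1 p.2 s)
          = (⨆ z : MaxProf S B, ⨅ y : MinProf S A, ∑ s, ρ s * V y z s)) := by
  have hρ := fun s => (hρpos s).le
  have hconv' s w hw := (hconv s w hw).strictConvexOn hμ₁
  have hconc' s u hu := (hconc s u hu).strictConcaveOn hμ₂
  obtain ⟨V₀, y₀, z₀, hV₀, hsad⟩ := exists_isFixedPt_Tsoft_isSaddlePointOn hP0 hP1 hγ0.le hγ1
    hcont (fun s w hw => (hconv' s w hw).convexOn) (fun s u hu => (hconc' s u hu).concaveOn)
  have hub z : ∀ s, V y₀ z s ≤ V₀ s := le_of_isFixedPt_Tsoft_of_Tsoft_le hP0 hP1 hγ0.le hγ1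
    (hfix y₀ z) fun s => ((hsad s) _ (y₀.2 s) _ (z.2 s)).trans_eq (congrFun hV₀ s)
  have hlb y : ∀ s, V₀ s ≤ V y z₀ s := le_of_le_Tsoft_of_isFixedPt_Tsoft hP0 hP1 hγ0.le hγ1
    (fun s => (congrFun hV₀ s).symm.trans_le ((hsad s) _ (y.2 s) _ (z₀.2 s))) (hfix y z₀)
  have hval : V y₀ z₀ = V₀ := funext fun s => le_antisymm (hub z₀ s) (hlb y₀ s)
  obtain ⟨C, hC⟩ := exists_forall_abs_le_of_isFixedPt_Tsoft hP0 hP1 hγ0.le hγ1 hcont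
  have hbdd y z : ∑ s, ρ s * -C ≤ ∑ s, ρ s * V y z s ∧ ∑ s, ρ s * V y z s ≤ ∑ s, ρ s * C :=
    ⟨sum_mul_le_sum_mul hρ fun s => (abs_le.1 (hC y z _ (hfix y z) s)).1,
      sum_mul_le_sum_mul hρ fun s => (abs_le.1 (hC y z _ (hfix y z) s)).2⟩
  refine ⟨⟨(y₀, z₀), fun y z => hval ▸ ⟨sum_mul_le_sum_mul hρ (hub z),
    sum_mul_le_sum_mul hρ (hlb y)⟩, ?_⟩, fun p hp => eq_ciInf_ciSup_and_eq_ciSup_ciInf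
      (fun y => ⟨_, Set.forall_mem_range.2 fun z => (hbdd y z).2⟩)
      (fun z => ⟨_, Set.forall_mem_range.2 fun y => (hbdd y z).1⟩) hp⟩
  rintro ⟨y, z⟩ hp
  obtain ⟨hy, hz⟩ := eq_and_eq_of_forall_sum_mul_saddle hρpos hub hlb hp
  exact Prod.ext
    (MinProf.eq_of_isSaddlePointOn hsad (fun s => hconv' s _ (z₀.2 s)) hV₀ (hy ▸ hfix y z₀))
    (MaxProf.eq_of_isSaddlePointOn hsad (fun s => hconc' s _ (y₀.2 s)) hV₀ (hz ▸ hfix y₀ z))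

theorem unique_equilibrium_of_regularized_game
    [Nonempty S] [Nonempty A] [Nonempty B]
    (r : S → A → B → ℝ) (P : S → A → B → S → ℝ)
    (hP0 : ∀ s a b s', 0 ≤ P s a b s')
    (hP1 : ∀ s a b, ∑ s', P s a b s' = 1)
    (γ : ℝ) (hγ0 : 0 < γ) (hγ1 : γ < 1)
    (h : S → (A → ℝ) → (B → ℝ) → ℝ)
    (hcont : ∀ s, Continuous (fun p : (A → ℝ) × (B → ℝ) => h s p.1 p.2))
    (μ₁ μ₂ : ℝ) (hμ₁ : 0 < μ₁) (hμ₂ : 0 < μ₂)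
    (hconv : ∀ s, ∀ w ∈ stdSimplex ℝ B,
      StrongConvexOn (stdSimplex ℝ A) μ₁ (fun u => h s u w))
    (hconc : ∀ s, ∀ u ∈ stdSimplex ℝ A,
      StrongConcaveOn (stdSimplex ℝ B) μ₂ (fun w => h s u w))
    (V : MinProf S A → MaxProf S B → S → ℝ)
    (hfix : ∀ y z, Tsoft r P γ h y.1 z.1 (V y z) = V y z)
    (ρ : S → ℝ) (hρ : ρ ∈ stdSimplex ℝ S) (hρpos : ∀ s, 0 < ρ s) :
    (∃! p : MinProf S A × MaxProf S B,
      ∀ (y : MinProf S A) (z : MaxProf S B),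
        (∑ s, ρ s * V p.1 z s) ≤ (∑ s, ρ s * V p.1 p.2 s) ∧
        (∑ s, ρ s * V p.1 p.2 s) ≤ (∑ s, ρ s * V y p.2 s)) ∧
    (∀ p : MinProf S A × MaxProf S B,
      (∀ (y : MinProf S A) (z : MaxProf S B),
        (∑ s, ρ s * V p.1 z s) ≤ (∑ s, ρ s * V p.1 p.2 s) ∧
        (∑ s, ρ s * V p.1 p.2 s) ≤ (∑ s, ρ s * V y p.2 s)) →
      (∑ s, ρ s * V p.1 p.2 s)
          = (⨅ y : MinProf S A, ⨆ z : MaxProf S B, ∑ s, ρ s * V y z s) ∧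
      (∑ s, ρ s * V p.1 p.2 s)
          = (⨆ z : MaxProf S B, ⨅ y : MinProf S A, ∑ s, ρ s * V y z s)) :=
  unique_equilibrium_of_regularized_game_general r P hP0 hP1 γ hγ0 hγ1 h hcont μ₁ μ₂ hμ₁ hμ₂ hconv
    hconc V hfix ρ hρpos
end
end

section
/- There exists a unique pair (u*, w*) ∈ Δ(A) × Δ(B) that is a saddle point of H, i.e. H(u*, w) ≤ H(u*, w*) ≤ H(u, w*) for all u ∈ Δ(A) and w ∈ Δ(B); moreover H(u*, w*) = ⨅_{u ∈ Δ(A)} ⨆_{w ∈ Δ(B)} H(u,w) = ⨆_{w ∈ Δ(B)} ⨅_{u ∈ Δ(A)} H(u,w). -/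
/-!
The bilinear part of `H` is linear in each variable, so `H` inherits strict convexity in `u` and
strict concavity in `w` from `h`; being continuous on the compact convex simplices, it has a saddle
point by Sion's minimax theorem. Given two saddle points `(a, b)` and `(a', b')`, the pair `(a, b')`
is a saddle point too, so `a, a'` both minimize the strictly convex `H · b'` and `b, b'` both
maximize the strictly concave `H a`.
-/

open Set

section SaddlePoint

variable {E F β : Type*} {X : Set E} {Y : Set F} {f : E → F → β} {a : E} {b : F}

lemma IsSaddlePointOn.isMinOn [Preorder β] (h : IsSaddlePointOn X Y f a b) (hb : b ∈ Y) :
    IsMinOn (f · b) X a :=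
  fun x hx => h x hx b hb

lemma IsSaddlePointOn.isMaxOn [Preorder β] (h : IsSaddlePointOn X Y f a b) (ha : a ∈ X) :
    IsMaxOn (f a) Y b :=
  fun y hy => h a ha y hy

lemma isSaddlePointOn_iff_forall_le_and_le [Preorder β] (a : X) (b : Y) :
    IsSaddlePointOn X Y f a b ↔ ∀ (x : X) (y : Y), f a y ≤ f a b ∧ f a b ≤ f x b :=
  ⟨fun h x y => ⟨h a a.2 y y.2, h x x.2 b b.2⟩,
    fun h x hx y hy => (h ⟨x, hx⟩ ⟨y, hy⟩).1.trans (h ⟨x, hx⟩ ⟨y, hy⟩).2⟩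

lemma IsSaddlePointOn.ciInf_ciSup_eq_and_ciSup_ciInf_eq [ConditionallyCompleteLattice β]
    (h : IsSaddlePointOn X Y f a b) (ha : a ∈ X) (hb : b ∈ Y)
    (hX : ∀ x ∈ X, BddAbove (f x '' Y)) (hY : ∀ y ∈ Y, BddBelow ((f · y) '' X)) :
    ⨅ x : X, ⨆ y : Y, f x y = f a b ∧ ⨆ y : Y, ⨅ x : X, f x y = f a b := by
  have : Nonempty X := ⟨⟨a, ha⟩⟩
  have : Nonempty Y := ⟨⟨b, hb⟩⟩
  simp only [image_eq_range] at hX hY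
  have le_iSup (x : X) : f a b ≤ ⨆ y : Y, f x y :=
    le_ciSup_of_le (hX x x.2) ⟨b, hb⟩ (h x x.2 b hb)
  have iInf_le (y : Y) : ⨅ x : X, f x y ≤ f a b :=
    ciInf_le_of_le (hY y y.2) ⟨a, ha⟩ (h a ha y y.2)
  constructor
  · refine le_antisymm ?_ (le_ciInf le_iSup)
    exact ciInf_le_of_le ⟨f a b, forall_mem_range.2 le_iSup⟩ ⟨a, ha⟩
      (ciSup_le fun y => h a ha y y.2)
  · refine le_antisymm (ciSup_le iInf_le) ?_
    exact le_ciSup_of_le ⟨f a b, forall_mem_range.2 iInf_le⟩ ⟨b, hb⟩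
      (le_ciInf fun x => h x x.2 b hb)

end SaddlePoint

section StrictConvexConcave

variable {E F : Type*} {X : Set E} {Y : Set F} {f : E → F → ℝ}

lemma IsSaddlePointOn.eq_of_strictConvexOn_of_strictConcaveOn [AddCommMonoid E] [Module ℝ E]
    [AddCommMonoid F] [Module ℝ F]
    (hconv : ∀ y ∈ Y, StrictConvexOn ℝ X (f · y)) (hconc : ∀ x ∈ X, StrictConcaveOn ℝ Y (f x))
    {a a' : E} {b b' : F} (ha : a ∈ X) (hb : b ∈ Y) (ha' : a' ∈ X) (hb' : b' ∈ Y)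
    (h : IsSaddlePointOn X Y f a b) (h' : IsSaddlePointOn X Y f a' b') : a = a' ∧ b = b' := by
  have hab' : IsSaddlePointOn X Y f a b' := h.swap_left ha' hb h'
  exact ⟨(hconv b' hb').eq_of_isMinOn (hab'.isMinOn hb') (h'.isMinOn hb') ha ha',
    (hconc a ha).eq_of_isMaxOn (h.isMaxOn ha) (hab'.isMaxOn ha) hb hb'⟩

theorem existsUnique_isSaddlePointOn
    [TopologicalSpace E] [AddCommGroup E] [Module ℝ E] [IsTopologicalAddGroup E]
    [ContinuousSMul ℝ E] [TopologicalSpace F] [AddCommGroup F] [Module ℝ F]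
    [IsTopologicalAddGroup F] [ContinuousSMul ℝ F]
    (hXne : X.Nonempty) (hXc : IsCompact X) (hYne : Y.Nonempty) (hYc : IsCompact Y)
    (hfX : ∀ y ∈ Y, ContinuousOn (f · y) X) (hfY : ∀ x ∈ X, ContinuousOn (f x) Y)
    (hconv : ∀ y ∈ Y, StrictConvexOn ℝ X (f · y)) (hconc : ∀ x ∈ X, StrictConcaveOn ℝ Y (f x)) :
    ∃! p : X × Y, IsSaddlePointOn X Y f p.1 p.2 := by
  obtain ⟨a, ha, b, hb, hab⟩ := Sion.exists_isSaddlePointOn hXne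
    (hconv _ hYne.some_mem).1 hXc (fun y hy => (hfX y hy).lowerSemicontinuousOn)
    (fun y hy => (hconv y hy).convexOn.quasiconvexOn) (hconc _ hXne.some_mem).1 hYne hYc
    (fun x hx => (hfY x hx).upperSemicontinuousOn)
    (fun x hx => (hconc x hx).concaveOn.quasiconcaveOn)
  refine ⟨(⟨a, ha⟩, ⟨b, hb⟩), hab, fun p hp => ?_⟩
  obtain ⟨rfl, rfl⟩ := hp.eq_of_strictConvexOn_of_strictConcaveOn hconv hconc
    p.1.2 p.2.2 ha hb hab
  rfl

end StrictConvexConcave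

theorem unique_saddle_point_of_regularized_matrix_game
    {A B : Type*} [Fintype A] [Fintype B] [Nonempty A] [Nonempty B]
    (Q : A → B → ℝ) (h : (A → ℝ) → (B → ℝ) → ℝ)
    (hcont : Continuous (fun p : (A → ℝ) × (B → ℝ) => h p.1 p.2))
    (μ₁ μ₂ : ℝ) (hμ₁ : 0 < μ₁) (hμ₂ : 0 < μ₂)
    (hconv : ∀ w ∈ stdSimplex ℝ B,
      StrongConvexOn (stdSimplex ℝ A) μ₁ (fun u => h u w))
    (hconc : ∀ u ∈ stdSimplex ℝ A,
      StrongConcaveOn (stdSimplex ℝ B) μ₂ (fun w => h u w))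
    (H : (A → ℝ) → (B → ℝ) → ℝ)
    (hH : ∀ u w, H u w = (∑ a, ∑ b, u a * w b * Q a b) + h u w) :
    (∃! p : stdSimplex ℝ A × stdSimplex ℝ B,
      ∀ (u : stdSimplex ℝ A) (w : stdSimplex ℝ B),
        H p.1.1 w.1 ≤ H p.1.1 p.2.1 ∧ H p.1.1 p.2.1 ≤ H u.1 p.2.1) ∧
    (∀ p : stdSimplex ℝ A × stdSimplex ℝ B,
      (∀ (u : stdSimplex ℝ A) (w : stdSimplex ℝ B),
        H p.1.1 w.1 ≤ H p.1.1 p.2.1 ∧ H p.1.1 p.2.1 ≤ H u.1 p.2.1) →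
      H p.1.1 p.2.1 = (⨅ u : stdSimplex ℝ A, ⨆ w : stdSimplex ℝ B, H u.1 w.1) ∧
      H p.1.1 p.2.1 = (⨆ w : stdSimplex ℝ B, ⨅ u : stdSimplex ℝ A, H u.1 w.1)) := by
  classical
  have hH' : ∀ u w, H u w = Matrix.toLinearMap₂' ℝ (Matrix.of Q) u w + h u w := by
    intro u w
    simp only [hH, Matrix.toLinearMap₂'_apply, smul_eq_mul, Matrix.of_apply, mul_assoc]
  have hHcont : Continuous fun p : (A → ℝ) × (B → ℝ) => H p.1 p.2 := by
    simp only [hH]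
    fun_prop
  have hHA : ∀ w, ContinuousOn (H · w) (stdSimplex ℝ A) := fun w =>
    (hHcont.comp (.prodMk_left w)).continuousOn
  have hHB : ∀ u, ContinuousOn (H u) (stdSimplex ℝ B) := fun u =>
    (hHcont.comp (.prodMk_right u)).continuousOn
  have hHconv : ∀ w ∈ stdSimplex ℝ B, StrictConvexOn ℝ (stdSimplex ℝ A) (H · w) := fun w hw =>
    ((((Matrix.toLinearMap₂' ℝ (Matrix.of Q)).flip w).convexOn (convex_stdSimplex ℝ A))
      |>.add_strictConvexOn ((hconv w hw).strictConvexOn hμ₁)).congr fun u _ => (hH' u w).symm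
  have hHconc : ∀ u ∈ stdSimplex ℝ A, StrictConcaveOn ℝ (stdSimplex ℝ B) (H u) := fun u hu =>
    (((Matrix.toLinearMap₂' ℝ (Matrix.of Q) u).concaveOn (convex_stdSimplex ℝ B))
      |>.add_strictConcaveOn ((hconc u hu).strictConcaveOn hμ₂)).congr fun w _ => (hH' u w).symm
  have hAne : (stdSimplex ℝ A).Nonempty := nonempty_coe_sort.1 inferInstance
  have hBne : (stdSimplex ℝ B).Nonempty := nonempty_coe_sort.1 inferInstance
  simp only [← isSaddlePointOn_iff_forall_le_and_le]
  refine ⟨existsUnique_isSaddlePointOn hAne (isCompact_stdSimplex ℝ A) hBne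
    (isCompact_stdSimplex ℝ B) (fun w _ => hHA w) (fun u _ => hHB u) hHconv hHconc, fun p hp => ?_⟩
  obtain ⟨hinf, hsup⟩ := hp.ciInf_ciSup_eq_and_ciSup_ciInf_eq p.1.2 p.2.2
    (fun u _ => ((isCompact_stdSimplex ℝ B).image_of_continuousOn (hHB u)).bddAbove)
    (fun w _ => ((isCompact_stdSimplex ℝ A).image_of_continuousOn (hHA w)).bddBelow)
  exact ⟨hinf.symm, hsup.symm⟩
end

section
/- Let V* : S → ℝ satisfy T_{*,h} V* = V*. Then there exists a unique pair of profiles (y*, z*) satisfying both of the following: (i) T_{y*,z*,h} V* = V* (so V* is the fixed point of T_{y*,z*,h}); (ii) for every max-player profile z and every V' : S → ℝ with T_{y*,z,h} V' = V' one has V'(s) ≤ V*(s) for all s, and for every min-player profile y and every V'' : S → ℝ with T_{y,z*,h} V'' = V'' one has V*(s) ≤ V''(s) for all s. -/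
open scoped BigOperators

noncomputable section

variable {S A B : Type*} [Fintype S] [Fintype A] [Fintype B]

/-- Soft min–max Bellman optimality operator. -/
def TstarH (r : S → A → B → ℝ) (P : S → A → B → S → ℝ) (γ : ℝ)
    (h : S → (A → ℝ) → (B → ℝ) → ℝ) (V : S → ℝ) (s : S) : ℝ :=
  ⨅ u : stdSimplex ℝ A, ⨆ w : stdSimplex ℝ B,
    (∑ a, ∑ b, u.1 a * w.1 b * QV r P γ V s a b) + h s u.1 w.1

/-! At each state `s` the stage game `(u, w) ↦ T_{u,w,h} V* (s)` is continuous and strictly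
convex–concave on `Δ(A) × Δ(B)`, so Sion's theorem gives a saddle point `(y* s, z* s)`; its value
is `T_{*,h} V* (s) = V* s`. Every policy operator `T_{y,z,h}` satisfies Blackwell's conditions,
hence is a `γ`-contraction obeying a comparison principle, and comparing its fixed points with
`V*` turns the saddle inequalities into (ii). Conversely, if `(y, z)` satisfies (ii), comparison
forces `V*` to be the fixed point of `T_{y,z*,h}`, so `y s` minimises the strictly convex
`u ↦ T_{u,z* s,h} V* (s)` just as `y* s` does, whence `y = y*`; symmetrically `z = z*`. -/

open Finset

section Blackwell

variable {ι : Type*}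

/-- Blackwell's sufficient conditions for a contraction (monotonicity and discounting),
combined into one inequality. -/
def BlackwellCondition (γ : ℝ) (T : (ι → ℝ) → ι → ℝ) : Prop :=
  ∀ (V W : ι → ℝ) (M : ℝ), (∀ i, V i ≤ W i + M) → ∀ i, T V i ≤ T W i + γ * M

variable {γ : ℝ} {T : (ι → ℝ) → ι → ℝ}

theorem BlackwellCondition.le_of_le_apply_of_apply_le [Finite ι] (hT : BlackwellCondition γ T)
    (hγ : γ < 1) {V W : ι → ℝ} (hV : ∀ i, V i ≤ T V i) (hW : ∀ i, T W i ≤ W i) : V ≤ W := by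
  rcases isEmpty_or_nonempty ι with _ | _
  · exact fun i => isEmptyElim i
  obtain ⟨i₀, hi₀⟩ := Finite.exists_max fun i => V i - W i
  have hshift := hT V W (V i₀ - W i₀) (fun i => by linarith [hi₀ i]) i₀
  have hmax : V i₀ - W i₀ ≤ 0 := by nlinarith [hV i₀, hW i₀]
  exact fun i => by linarith [hi₀ i]

theorem BlackwellCondition.exists_fixedPoint [Fintype ι] (hT : BlackwellCondition γ T)
    (hγ₀ : 0 ≤ γ) (hγ₁ : γ < 1) : ∃ V, T V = V := by
  have hlip : LipschitzWith γ.toNNReal T := LipschitzWith.of_dist_le_mul fun V W => by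
    rw [Real.coe_toNNReal _ hγ₀, dist_pi_le_iff (by positivity)]
    have hVW : ∀ i, |V i - W i| ≤ dist V W := fun i => by
      simpa only [Real.dist_eq] using dist_le_pi_dist V W i
    intro i
    rw [Real.dist_eq, abs_sub_le_iff]
    constructor
    · linarith [hT V W (dist V W) (fun j => by linarith [(abs_sub_le_iff.1 (hVW j)).1]) i]
    · linarith [hT W V (dist V W) (fun j => by linarith [(abs_sub_le_iff.1 (hVW j)).2]) i]
  exact ⟨_, (ContractingWith.fixedPoint_isFixedPt (f := T)
    ⟨Real.toNNReal_lt_one.2 hγ₁, hlip⟩)⟩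

theorem BlackwellCondition.apply_eq_of_le_apply [Fintype ι] (hT : BlackwellCondition γ T)
    (hγ₀ : 0 ≤ γ) (hγ₁ : γ < 1) {V : ι → ℝ} (hV : ∀ i, V i ≤ T V i)
    (hfix : ∀ W, T W = W → W ≤ V) : T V = V := by
  obtain ⟨W, hW⟩ := hT.exists_fixedPoint hγ₀ hγ₁
  obtain rfl : V = W :=
    le_antisymm (hT.le_of_le_apply_of_apply_le hγ₁ hV fun i => (congrFun hW i).le) (hfix W hW)
  exact hW

theorem BlackwellCondition.apply_eq_of_apply_le [Fintype ι] (hT : BlackwellCondition γ T)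
    (hγ₀ : 0 ≤ γ) (hγ₁ : γ < 1) {V : ι → ℝ} (hV : ∀ i, T V i ≤ V i)
    (hfix : ∀ W, T W = W → V ≤ W) : T V = V := by
  obtain ⟨W, hW⟩ := hT.exists_fixedPoint hγ₀ hγ₁
  obtain rfl : W = V :=
    le_antisymm (hT.le_of_le_apply_of_apply_le hγ₁ (fun i => (congrFun hW i).ge) hV) (hfix W hW)
  exact hW

end Blackwell

section SaddlePoint

variable {E F : Type*} {X : Set E} {Y : Set F} {f : E → F → ℝ} {a : E} {b : F}

theorem IsSaddlePointOn.ciInf_ciSup_eq (h : IsSaddlePointOn X Y f a b) (ha : a ∈ X) (hb : b ∈ Y)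
    (hbdd : ∀ x ∈ X, BddAbove (f x '' Y)) : ⨅ x : X, ⨆ y : Y, f x y = f a b := by
  have hbdd' : ∀ x ∈ X, BddAbove (Set.range fun y : Y => f x y) := fun x hx => by
    simpa only [Set.image_eq_range] using hbdd x hx
  have hle : ∀ x ∈ X, f a b ≤ ⨆ y : Y, f x y := fun x hx =>
    (h x hx b hb).trans (le_ciSup (hbdd' x hx) ⟨b, hb⟩)
  have : Nonempty X := ⟨⟨a, ha⟩⟩
  have : Nonempty Y := ⟨⟨b, hb⟩⟩
  refine le_antisymm ?_ (le_ciInf fun x => hle x x.2)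
  exact (ciInf_le ⟨f a b, by rintro _ ⟨x, rfl⟩; exact hle x x.2⟩ ⟨a, ha⟩).trans
    (ciSup_le fun y => h a ha y y.2)

theorem IsSaddlePointOn.eq_left_of_strictConvexOn [AddCommMonoid E] [Module ℝ E] {a' : E}
    (h : IsSaddlePointOn X Y f a b) (ha : a ∈ X) (hb : b ∈ Y)
    (hf : StrictConvexOn ℝ X fun x => f x b) (ha' : a' ∈ X)
    (heq : f a' b = f a b) : a' = a :=
  hf.eq_of_isMinOn (fun x hx => heq.trans_le (h x hx b hb)) (fun x hx => h x hx b hb) ha' ha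

theorem IsSaddlePointOn.eq_right_of_strictConcaveOn [AddCommMonoid F] [Module ℝ F] {b' : F}
    (h : IsSaddlePointOn X Y f a b) (ha : a ∈ X) (hb : b ∈ Y)
    (hf : StrictConcaveOn ℝ Y (f a)) (hb' : b' ∈ Y)
    (heq : f a b' = f a b) : b' = b :=
  hf.eq_of_isMaxOn (fun y hy => (h a ha y hy).trans_eq heq.symm) (fun y hy => h a ha y hy) hb' hb

end SaddlePoint

section StageGame

variable (r : S → A → B → ℝ) (P : S → A → B → S → ℝ) (γ : ℝ) (h : S → (A → ℝ) → (B → ℝ) → ℝ)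

theorem sum_sum_mul_mul_eq_toLinearMap₂' [DecidableEq A] [DecidableEq B] (Q : Matrix A B ℝ)
    (u : A → ℝ) (w : B → ℝ) :
    ∑ a, ∑ b, u a * w b * Q a b = Matrix.toLinearMap₂' ℝ Q u w := by
  simp only [Matrix.toLinearMap₂'_apply, smul_eq_mul, mul_assoc]

def stagePayoff (V : S → ℝ) (s : S) (u : A → ℝ) (w : B → ℝ) : ℝ :=
  (∑ a, ∑ b, u a * w b * QV r P γ V s a b) + h s u w

variable {r P γ h}

theorem continuous_stagePayoff {V : S → ℝ} {s : S}
    (hcont : Continuous fun p : (A → ℝ) × (B → ℝ) => h s p.1 p.2) :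
    Continuous fun p : (A → ℝ) × (B → ℝ) => stagePayoff r P γ h V s p.1 p.2 := by
  unfold stagePayoff
  fun_prop

theorem StrictConvexOn.stagePayoff {V : S → ℝ} {s : S} {w : B → ℝ}
    (hconv : StrictConvexOn ℝ (stdSimplex ℝ A) fun u => h s u w) :
    StrictConvexOn ℝ (stdSimplex ℝ A) fun u => stagePayoff r P γ h V s u w := by
  classical
  simp only [_root_.stagePayoff, sum_sum_mul_mul_eq_toLinearMap₂' (QV r P γ V s)]
  exact (((Matrix.toLinearMap₂' ℝ _).flip w).convexOn
    (convex_stdSimplex ℝ A)).add_strictConvexOn hconv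

theorem StrictConcaveOn.stagePayoff {V : S → ℝ} {s : S} {u : A → ℝ}
    (hconc : StrictConcaveOn ℝ (stdSimplex ℝ B) fun w => h s u w) :
    StrictConcaveOn ℝ (stdSimplex ℝ B) fun w => stagePayoff r P γ h V s u w := by
  classical
  simp only [_root_.stagePayoff, sum_sum_mul_mul_eq_toLinearMap₂' (QV r P γ V s)]
  exact ((Matrix.toLinearMap₂' ℝ _ u).concaveOn (convex_stdSimplex ℝ B)).add_strictConcaveOn
    hconc

theorem exists_isSaddlePointOn_stagePayoff [Nonempty A] [Nonempty B] (V : S → ℝ) (s : S)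
    (hcont : Continuous fun p : (A → ℝ) × (B → ℝ) => h s p.1 p.2)
    (hconv : ∀ w ∈ stdSimplex ℝ B, StrictConvexOn ℝ (stdSimplex ℝ A) fun u => h s u w)
    (hconc : ∀ u ∈ stdSimplex ℝ A, StrictConcaveOn ℝ (stdSimplex ℝ B) fun w => h s u w) :
    ∃ u ∈ stdSimplex ℝ A, ∃ w ∈ stdSimplex ℝ B,
      IsSaddlePointOn (stdSimplex ℝ A) (stdSimplex ℝ B) (stagePayoff r P γ h V s) u w := by
  have hf := continuous_stagePayoff (r := r) (P := P) (γ := γ) (V := V) hcont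
  exact Sion.exists_isSaddlePointOn (isPathConnected_stdSimplex A).nonempty
    (convex_stdSimplex ℝ A) (isCompact_stdSimplex ℝ A)
    (fun w _ => (hf.comp (.prodMk_left w)).continuousOn.lowerSemicontinuousOn)
    (fun w hw => (hconv w hw).stagePayoff.convexOn.quasiconvexOn)
    (convex_stdSimplex ℝ B) (isPathConnected_stdSimplex B).nonempty (isCompact_stdSimplex ℝ B)
    (fun u _ => (hf.comp (.prodMk_right u)).continuousOn.upperSemicontinuousOn)
    (fun u hu => (hconc u hu).stagePayoff.concaveOn.quasiconcaveOn)

theorem blackwellCondition_Tsoft (hP₀ : ∀ s a b s', 0 ≤ P s a b s')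
    (hP₁ : ∀ s a b, ∑ s', P s a b s' = 1) (hγ : 0 ≤ γ) {y : S → A → ℝ} {z : S → B → ℝ}
    (hy : ∀ s, y s ∈ stdSimplex ℝ A) (hz : ∀ s, z s ∈ stdSimplex ℝ B) :
    BlackwellCondition γ (Tsoft r P γ h y z) := by
  intro V W M hM s
  have hQ : ∀ a b, QV r P γ V s a b ≤ QV r P γ W s a b + γ * M := fun a b => by
    have : ∑ s', P s a b s' * V s' ≤ ∑ s', P s a b s' * W s' + M := calc
      _ ≤ ∑ s', P s a b s' * (W s' + M) :=
        sum_le_sum fun s' _ => mul_le_mul_of_nonneg_left (hM s') (hP₀ s a b s')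
      _ = _ := by simp only [mul_add, sum_add_distrib, ← sum_mul, hP₁, one_mul]
    simp only [QV]
    nlinarith
  have hweights : ∑ a, ∑ b, y s a * z s b = 1 := by
    simp only [← mul_sum, (hz s).2, mul_one, (hy s).2]
  calc Tsoft r P γ h y z V s
      ≤ ∑ a, ∑ b, y s a * z s b * (QV r P γ W s a b + γ * M) + h s (y s) (z s) := by
        unfold Tsoft Tyz
        gcongr with a _ b _
        exacts [mul_nonneg ((hy s).1 a) ((hz s).1 b), hQ a b]
      _ = Tsoft r P γ h y z W s + γ * M := by
        simp only [Tsoft, Tyz, mul_add, sum_add_distrib, ← sum_mul, hweights]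
        ring

end StageGame

theorem unique_equilibrium_profile_pair_general
    [Nonempty A] [Nonempty B]
    (r : S → A → B → ℝ) (P : S → A → B → S → ℝ)
    (hP0 : ∀ s a b s', 0 ≤ P s a b s')
    (hP1 : ∀ s a b, ∑ s', P s a b s' = 1)
    (γ : ℝ) (hγ0 : 0 < γ) (hγ1 : γ < 1)
    (h : S → (A → ℝ) → (B → ℝ) → ℝ)
    (hcont : ∀ s, Continuous (fun p : (A → ℝ) × (B → ℝ) => h s p.1 p.2))
    (μ₁ μ₂ : ℝ) (hμ₁ : 0 < μ₁) (hμ₂ : 0 < μ₂)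
    (hconv : ∀ s, ∀ w ∈ stdSimplex ℝ B,
      StrongConvexOn (stdSimplex ℝ A) μ₁ (fun u => h s u w))
    (hconc : ∀ s, ∀ u ∈ stdSimplex ℝ A,
      StrongConcaveOn (stdSimplex ℝ B) μ₂ (fun w => h s u w))
    (Vstar : S → ℝ) (hVfix : ∀ s, TstarH r P γ h Vstar s = Vstar s) :
    ∃! p : MinProf S A × MaxProf S B,
      (∀ s, Tsoft r P γ h p.1.1 p.2.1 Vstar s = Vstar s) ∧
      (∀ (z : MaxProf S B) (V' : S → ℝ),
        (∀ s, Tsoft r P γ h p.1.1 z.1 V' s = V' s) → ∀ s, V' s ≤ Vstar s) ∧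
      (∀ (y : MinProf S A) (V'' : S → ℝ),
        (∀ s, Tsoft r P γ h y.1 p.2.1 V'' s = V'' s) → ∀ s, Vstar s ≤ V'' s) := by
  have hcvx s w hw := (hconv s w hw).strictConvexOn hμ₁
  have hccv s u hu := (hconc s u hu).strictConcaveOn hμ₂
  choose y hy z hz hsaddle using fun s => exists_isSaddlePointOn_stagePayoff (r := r) (P := P)
    (γ := γ) Vstar s (hcont s) (hcvx s) (hccv s)
  have hvalue s : Tsoft r P γ h y z Vstar s = Vstar s := by
    rw [← hVfix s]
    exact ((hsaddle s).ciInf_ciSup_eq (hy s) (hz s) fun u _ =>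
      (isCompact_stdSimplex ℝ B).bddAbove_image
        ((continuous_stagePayoff (hcont s)).comp (.prodMk_right u)).continuousOn).symm
  have hy_guarantee {z' : S → B → ℝ} (hz' : ∀ s, z' s ∈ stdSimplex ℝ B) s :
      Tsoft r P γ h y z' Vstar s ≤ Vstar s :=
    (hvalue s).symm ▸ hsaddle s (y s) (hy s) (z' s) (hz' s)
  have hz_guarantee {y' : S → A → ℝ} (hy' : ∀ s, y' s ∈ stdSimplex ℝ A) s :
      Vstar s ≤ Tsoft r P γ h y' z Vstar s :=
    (hvalue s).symm ▸ hsaddle s (y' s) (hy' s) (z s) (hz s)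
  have hblackwell {y' : S → A → ℝ} {z' : S → B → ℝ} (hy' : ∀ s, y' s ∈ stdSimplex ℝ A)
      (hz' : ∀ s, z' s ∈ stdSimplex ℝ B) :=
    blackwellCondition_Tsoft (r := r) (h := h) hP0 hP1 hγ0.le hy' hz'
  refine ⟨(⟨y, hy⟩, ⟨z, hz⟩), ⟨hvalue, ?_, ?_⟩, ?_⟩
  · rintro ⟨z', hz'⟩ V' hV'
    exact (hblackwell hy hz').le_of_le_apply_of_apply_le hγ1 (fun s => (hV' s).ge)
      (hy_guarantee hz')
  · rintro ⟨y', hy'⟩ V'' hV''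
    exact (hblackwell hy' hz).le_of_le_apply_of_apply_le hγ1 (hz_guarantee hy')
      fun s => (hV'' s).le
  rintro ⟨⟨y', hy'⟩, ⟨z', hz'⟩⟩ ⟨-, hmin, hmax⟩
  have hy'z : Tsoft r P γ h y' z Vstar = Vstar :=
    (hblackwell hy' hz).apply_eq_of_le_apply hγ0.le hγ1 (hz_guarantee hy')
      fun W hW => hmin ⟨z, hz⟩ W (congrFun hW)
  have hyz' : Tsoft r P γ h y z' Vstar = Vstar :=
    (hblackwell hy hz').apply_eq_of_apply_le hγ0.le hγ1 (hy_guarantee hz')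
      fun W hW => hmax ⟨y, hy⟩ W (congrFun hW)
  have hyy' : y' = y := funext fun s => (hsaddle s).eq_left_of_strictConvexOn (hy s) (hz s)
    (hcvx s _ (hz s)).stagePayoff (hy' s) ((congrFun hy'z s).trans (hvalue s).symm)
  have hzz' : z' = z := funext fun s => (hsaddle s).eq_right_of_strictConcaveOn (hy s) (hz s)
    (hccv s _ (hy s)).stagePayoff (hz' s) ((congrFun hyz' s).trans (hvalue s).symm)
  subst hyy' hzz'
  rfl

theorem unique_equilibrium_profile_pair
    [Nonempty S] [Nonempty A] [Nonempty B]
    (r : S → A → B → ℝ) (P : S → A → B → S → ℝ)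
    (hP0 : ∀ s a b s', 0 ≤ P s a b s')
    (hP1 : ∀ s a b, ∑ s', P s a b s' = 1)
    (γ : ℝ) (hγ0 : 0 < γ) (hγ1 : γ < 1)
    (h : S → (A → ℝ) → (B → ℝ) → ℝ)
    (hcont : ∀ s, Continuous (fun p : (A → ℝ) × (B → ℝ) => h s p.1 p.2))
    (μ₁ μ₂ : ℝ) (hμ₁ : 0 < μ₁) (hμ₂ : 0 < μ₂)
    (hconv : ∀ s, ∀ w ∈ stdSimplex ℝ B,
      StrongConvexOn (stdSimplex ℝ A) μ₁ (fun u => h s u w))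
    (hconc : ∀ s, ∀ u ∈ stdSimplex ℝ A,
      StrongConcaveOn (stdSimplex ℝ B) μ₂ (fun w => h s u w))
    (Vstar : S → ℝ) (hVfix : ∀ s, TstarH r P γ h Vstar s = Vstar s) :
    ∃! p : MinProf S A × MaxProf S B,
      (∀ s, Tsoft r P γ h p.1.1 p.2.1 Vstar s = Vstar s) ∧
      (∀ (z : MaxProf S B) (V' : S → ℝ),
        (∀ s, Tsoft r P γ h p.1.1 z.1 V' s = V' s) → ∀ s, V' s ≤ Vstar s) ∧
      (∀ (y : MinProf S A) (V'' : S → ℝ),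
        (∀ s, Tsoft r P γ h y.1 p.2.1 V'' s = V'' s) → ∀ s, Vstar s ≤ V'' s) :=
  unique_equilibrium_profile_pair_general r P hP0 hP1 γ hγ0 hγ1 h hcont μ₁ μ₂ hμ₁ hμ₂ hconv hconc
    Vstar hVfix
end
end

section
/- Assume |r x s a| ≤ R_max for all x, s, a. If V : S → ℝ satisfies 𝒯_x V = V for some parameter x, then ‖V‖_∞ ≤ (R_max + τ · log |A|) / (1 − γ). -/
open scoped BigOperators

noncomputable section

variable {S A X : Type*} [Fintype S] [Fintype A]
  [NormedAddCommGroup X] [NormedSpace ℝ X]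

/-- Softmax (entropy-regularized) Bellman optimality operator. -/
def softBellman (r : X → S → A → ℝ) (P : X → S → A → S → ℝ)
    (γ τ : ℝ) (x : X) (V : S → ℝ) (s : S) : ℝ :=
  τ * Real.log (∑ a, Real.exp ((r x s a + γ * ∑ s', P x s a s' * V s') / τ))

theorem soft_value_fixed_point_bound
    [Nonempty S] [Nonempty A]
    (r : X → S → A → ℝ) (P : X → S → A → S → ℝ)
    (hP0 : ∀ x s a s', 0 ≤ P x s a s')
    (hP1 : ∀ x s a, ∑ s', P x s a s' = 1)
    (γ : ℝ) (hγ0 : 0 < γ) (hγ1 : γ < 1)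
    (τ : ℝ) (hτ : 0 < τ)
    (Rmax : ℝ) (hr : ∀ x s a, |r x s a| ≤ Rmax)
    (x : X) (V : S → ℝ)
    (hfix : ∀ s, softBellman r P γ τ x V s = V s) :
    (⨆ s, |V s|) ≤ (Rmax + τ * Real.log (Fintype.card A)) / (1 - γ) := by
  set M := ⨆ s, |V s| with hM
  have hMle : ∀ s, |V s| ≤ M :=
    fun s => le_ciSup (Set.Finite.bddAbove (Set.finite_range (fun t => |V t|))) s
  obtain ⟨s₀, hs₀⟩ := Finite.exists_max (fun s => |V s|)
  have hMeq : M = |V s₀| := le_antisymm (ciSup_le hs₀) (hMle s₀)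
  have hM0 : 0 ≤ M := le_trans (abs_nonneg _) (hMle (Classical.arbitrary S))
  set L := Real.log (Fintype.card A) with hL
  have hL0 : 0 ≤ L := by
    apply Real.log_nonneg
    have : 1 ≤ Fintype.card A := Fintype.card_pos
    exact_mod_cast this
  have hq : ∀ a, |∑ s', P x s₀ a s' * V s'| ≤ M := by
    intro a
    calc |∑ s', P x s₀ a s' * V s'| ≤ ∑ s', |P x s₀ a s' * V s'| :=
          Finset.abs_sum_le_sum_abs _ _
      _ ≤ ∑ s', P x s₀ a s' * M := by
          apply Finset.sum_le_sum; intro i _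
          rw [abs_mul, abs_of_nonneg (hP0 x s₀ a i)]
          exact mul_le_mul_of_nonneg_left (hMle i) (hP0 x s₀ a i)
      _ = M := by rw [← Finset.sum_mul, hP1, one_mul]
  have hnum_ub : ∀ a, r x s₀ a + γ * ∑ s', P x s₀ a s' * V s' ≤ Rmax + γ * M := by
    intro a
    have h1 : r x s₀ a ≤ Rmax := (abs_le.mp (hr x s₀ a)).2
    have h2 : γ * ∑ s', P x s₀ a s' * V s' ≤ γ * M :=
      mul_le_mul_of_nonneg_left ((abs_le.mp (hq a)).2) hγ0.le
    linarith
  have hnum_lb : ∀ a, -(Rmax + γ * M) ≤ r x s₀ a + γ * ∑ s', P x s₀ a s' * V s' := by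
    intro a
    have h1 : -Rmax ≤ r x s₀ a := (abs_le.mp (hr x s₀ a)).1
    have h2 : γ * (-M) ≤ γ * ∑ s', P x s₀ a s' * V s' :=
      mul_le_mul_of_nonneg_left ((abs_le.mp (hq a)).1) hγ0.le
    linarith
  set f : A → ℝ := fun a => Real.exp ((r x s₀ a + γ * ∑ s', P x s₀ a s' * V s') / τ) with hf
  have hsum_pos : 0 < ∑ a, f a :=
    Finset.sum_pos (fun a _ => Real.exp_pos _) Finset.univ_nonempty
  have hcard_pos : (0 : ℝ) < Fintype.card A := by
    have : 0 < Fintype.card A := Fintype.card_pos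
    exact_mod_cast this
  -- upper bound on log sum
  have hub : softBellman r P γ τ x V s₀ ≤ Rmax + τ * L + γ * M := by
    have hsum_le : ∑ a, f a ≤ (Fintype.card A : ℝ) * Real.exp ((Rmax + γ * M) / τ) := by
      calc ∑ a, f a ≤ ∑ _a : A, Real.exp ((Rmax + γ * M) / τ) := by
            apply Finset.sum_le_sum; intro a _
            exact Real.exp_le_exp.mpr (div_le_div_of_nonneg_right (hnum_ub a) hτ.le)
        _ = (Fintype.card A : ℝ) * Real.exp ((Rmax + γ * M) / τ) := by
            simp [Finset.sum_const, nsmul_eq_mul]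
    have hlog : Real.log (∑ a, f a) ≤ L + (Rmax + γ * M) / τ := by
      calc Real.log (∑ a, f a)
          ≤ Real.log ((Fintype.card A : ℝ) * Real.exp ((Rmax + γ * M) / τ)) :=
            Real.log_le_log hsum_pos hsum_le
        _ = L + (Rmax + γ * M) / τ := by
            rw [Real.log_mul (ne_of_gt hcard_pos) (Real.exp_ne_zero _), Real.log_exp]
    have := mul_le_mul_of_nonneg_left hlog hτ.le
    rw [mul_add, mul_div_cancel₀ _ (ne_of_gt hτ)] at this
    simp only [softBellman]
    linarith
  -- lower bound on log sum
  have hlb : -(Rmax + τ * L + γ * M) ≤ softBellman r P γ τ x V s₀ := by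
    have hone : Real.exp (-(Rmax + γ * M) / τ) ≤ ∑ a, f a := by
      have a₀ := Classical.arbitrary A
      calc Real.exp (-(Rmax + γ * M) / τ) ≤ f a₀ :=
            Real.exp_le_exp.mpr (div_le_div_of_nonneg_right (hnum_lb a₀) hτ.le)
        _ ≤ ∑ a, f a :=
            Finset.single_le_sum (f := f) (fun a _ => (Real.exp_pos _).le) (Finset.mem_univ a₀)
    have hlog : -(Rmax + γ * M) / τ ≤ Real.log (∑ a, f a) := by
      have := Real.log_le_log (Real.exp_pos _) hone
      rwa [Real.log_exp] at this
    have := mul_le_mul_of_nonneg_left hlog hτ.le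
    rw [mul_div_cancel₀ _ (ne_of_gt hτ)] at this
    have hτL : 0 ≤ τ * L := mul_nonneg hτ.le hL0
    simp only [softBellman]
    linarith
  have habs : |softBellman r P γ τ x V s₀| ≤ Rmax + τ * L + γ * M := abs_le.mpr ⟨hlb, hub⟩
  rw [hfix s₀, ← hMeq] at habs
  rw [le_div_iff₀ (by linarith : (0:ℝ) < 1 - γ)]
  linarith
end
end

section
/- Suppose C_r, C_P ≥ 0 are such that for all parameters x₁, x₂ and all s, a: |r x₁ s a − r x₂ s a| ≤ C_r · ‖x₁ − x₂‖ and ∑_{s'} |P x₁ s a s' − P x₂ s a s'| ≤ C_P · ‖x₁ − x₂‖. Then for every V : S → ℝ and all x₁, x₂: ‖𝒯_{x₁} V − 𝒯_{x₂} V‖_∞ ≤ (C_r + γ · C_P · ‖V‖_∞) · ‖x₁ − x₂‖. -/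
open scoped BigOperators

lemma lse_mono {A : Type*} [Fintype A] [Nonempty A] {τ B : ℝ} (hτ : 0 < τ)
    (f g : A → ℝ) (h : ∀ a, f a ≤ g a + B) :
    τ * Real.log (∑ a, Real.exp (f a / τ)) ≤
    τ * Real.log (∑ a, Real.exp (g a / τ)) + B := by
  have hpos : 0 < ∑ a, Real.exp (g a / τ) :=
    Finset.sum_pos (fun a _ => Real.exp_pos _) Finset.univ_nonempty
  have h1 : (∑ a, Real.exp (f a / τ)) ≤ Real.exp (B / τ) * ∑ a, Real.exp (g a / τ) := by
    rw [Finset.mul_sum]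
    refine Finset.sum_le_sum fun a _ => ?_
    rw [← Real.exp_add, show B / τ + g a / τ = (g a + B) / τ by ring]
    exact Real.exp_le_exp.2 (div_le_div_of_nonneg_right (h a) hτ.le)
  have h2 : Real.log (∑ a, Real.exp (f a / τ)) ≤ B / τ + Real.log (∑ a, Real.exp (g a / τ)) := by
    calc Real.log (∑ a, Real.exp (f a / τ)) ≤ Real.log (Real.exp (B / τ) * ∑ a, Real.exp (g a / τ)) :=
          Real.log_le_log (Finset.sum_pos (fun a _ => Real.exp_pos _) Finset.univ_nonempty) h1
      _ = B / τ + Real.log (∑ a, Real.exp (g a / τ)) := by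
          rw [Real.log_mul (Real.exp_ne_zero _) (ne_of_gt hpos), Real.log_exp]
  calc τ * Real.log (∑ a, Real.exp (f a / τ)) ≤ τ * (B / τ + Real.log (∑ a, Real.exp (g a / τ))) :=
        mul_le_mul_of_nonneg_left h2 hτ.le
    _ = τ * Real.log (∑ a, Real.exp (g a / τ)) + B := by field_simp; ring

noncomputable section

variable {S A X : Type*} [Fintype S] [Fintype A]
  [NormedAddCommGroup X] [NormedSpace ℝ X]

theorem soft_bellman_lipschitz_in_parameter
    [Nonempty S] [Nonempty A]
    (r : X → S → A → ℝ) (P : X → S → A → S → ℝ)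
    (hP0 : ∀ x s a s', 0 ≤ P x s a s')
    (hP1 : ∀ x s a, ∑ s', P x s a s' = 1)
    (γ : ℝ) (hγ0 : 0 < γ) (hγ1 : γ < 1)
    (τ : ℝ) (hτ : 0 < τ)
    (Cr CP : ℝ) (hCr : 0 ≤ Cr) (hCP : 0 ≤ CP)
    (hrLip : ∀ x₁ x₂ s a, |r x₁ s a - r x₂ s a| ≤ Cr * ‖x₁ - x₂‖)
    (hPLip : ∀ x₁ x₂ s a, (∑ s', |P x₁ s a s' - P x₂ s a s'|) ≤ CP * ‖x₁ - x₂‖) :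
    ∀ (V : S → ℝ) (x₁ x₂ : X),
      (⨆ s, |softBellman r P γ τ x₁ V s - softBellman r P γ τ x₂ V s|) ≤
        (Cr + γ * CP * ⨆ s, |V s|) * ‖x₁ - x₂‖ := by
  intro V x₁ x₂
  set M := ⨆ s, |V s| with hM
  have hVle : ∀ s', |V s'| ≤ M := fun s' => le_ciSup (Set.Finite.bddAbove (Set.finite_range (fun s => |V s|))) s'
  have hM0 : 0 ≤ M := le_trans (abs_nonneg _) (hVle (Classical.arbitrary S))
  set B := (Cr + γ * CP * M) * ‖x₁ - x₂‖ with hB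
  apply ciSup_le
  intro s
  -- bound arguments difference
  have key : ∀ y₁ y₂ : X, ∀ a,
      r y₁ s a + γ * ∑ s', P y₁ s a s' * V s' ≤
      (r y₂ s a + γ * ∑ s', P y₂ s a s' * V s') + (Cr + γ * CP * M) * ‖y₁ - y₂‖ := by
    intro y₁ y₂ a
    have hr := hrLip y₁ y₂ s a
    have hp : |∑ s', P y₁ s a s' * V s' - ∑ s', P y₂ s a s' * V s'| ≤ CP * ‖y₁ - y₂‖ * M := by
      rw [← Finset.sum_sub_distrib]
      calc |∑ s', (P y₁ s a s' * V s' - P y₂ s a s' * V s')|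
          ≤ ∑ s', |P y₁ s a s' * V s' - P y₂ s a s' * V s'| := Finset.abs_sum_le_sum_abs _ _
        _ = ∑ s', |P y₁ s a s' - P y₂ s a s'| * |V s'| := by
            refine Finset.sum_congr rfl fun s' _ => ?_
            rw [← abs_mul, sub_mul]
        _ ≤ ∑ s', |P y₁ s a s' - P y₂ s a s'| * M :=
            Finset.sum_le_sum fun s' _ =>
              mul_le_mul_of_nonneg_left (hVle s') (abs_nonneg _)
        _ = (∑ s', |P y₁ s a s' - P y₂ s a s'|) * M := by rw [Finset.sum_mul]
        _ ≤ CP * ‖y₁ - y₂‖ * M :=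
            mul_le_mul_of_nonneg_right (hPLip y₁ y₂ s a) hM0
    have h1 := abs_le.1 hr
    have h2 := abs_le.1 hp
    nlinarith [h1.1, h1.2, h2.1, h2.2]
  have hsym : ‖x₂ - x₁‖ = ‖x₁ - x₂‖ := norm_sub_rev _ _
  have hle1 : softBellman r P γ τ x₁ V s ≤ softBellman r P γ τ x₂ V s + B := by
    simpa [softBellman, hB] using
      lse_mono hτ (fun a => r x₁ s a + γ * ∑ s', P x₁ s a s' * V s')
        (fun a => r x₂ s a + γ * ∑ s', P x₂ s a s' * V s') (key x₁ x₂)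
  have hle2 : softBellman r P γ τ x₂ V s ≤ softBellman r P γ τ x₁ V s + B := by
    have := lse_mono hτ (fun a => r x₂ s a + γ * ∑ s', P x₂ s a s' * V s')
        (fun a => r x₁ s a + γ * ∑ s', P x₁ s a s' * V s') (key x₂ x₁)
    simpa [softBellman, hB, hsym] using this
  rw [abs_sub_le_iff]
  constructor <;> linarith
end
end

section
/- Assume: (R-bound) |r x s a| ≤ R_max for all x, s, a; (R-Lip) |r x₁ s a − r x₂ s a| ≤ C_r · ‖x₁ − x₂‖ for all x₁, x₂, s, a; (P-Lip) ∑_{s'} |P x₁ s a s' − P x₂ s a s'| ≤ C_P · ‖x₁ − x₂‖ for all x₁, x₂, s, a. Set B_V = (R_max + τ · log |A|) / (1 − γ). If V₁, V₂ : S → ℝ satisfy 𝒯_{x₁} V₁ = V₁ and 𝒯_{x₂} V₂ = V₂, then ‖V₁ − V₂‖_∞ ≤ ((C_r + γ · C_P · B_V) / (1 − γ)) · ‖x₁ − x₂‖. -/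
open scoped BigOperators

noncomputable section

variable {S A X : Type*} [Fintype S] [Fintype A]
  [NormedAddCommGroup X] [NormedSpace ℝ X]

/-
The soft maximum `logSumExp τ` is monotone and commutes with adding constants, hence is
1-Lipschitz for the sup norm; the soft Bellman operator is therefore a `γ`-contraction whose
dependence on the parameter is controlled by that of `r` and `P`. A fixed point `V` satisfies
`‖V‖ ≤ R_max + τ log |A| + γ ‖V‖`, which gives `‖V‖ ≤ B_V`, and comparing the two fixed points
gives `‖V₁ - V₂‖ ≤ C_r δ + γ (‖V₁ - V₂‖ + C_P δ B_V)` with `δ = ‖x₁ - x₂‖`. Here `‖·‖` on `S → ℝ` is Mathlib's sup norm.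
-/

def logSumExp {ι : Type*} [Fintype ι] (τ : ℝ) (u : ι → ℝ) : ℝ :=
  τ * Real.log (∑ i, Real.exp (u i / τ))

namespace logSumExp

variable {ι : Type*} [Fintype ι] [Nonempty ι] {τ : ℝ}

theorem mono (hτ : 0 < τ) {u v : ι → ℝ} (h : ∀ i, u i ≤ v i) :
    logSumExp τ u ≤ logSumExp τ v := by
  unfold logSumExp
  gcongr with i
  exact h i

theorem add_const (hτ : 0 < τ) (u : ι → ℝ) (c : ℝ) :
    logSumExp τ (fun i => u i + c) = logSumExp τ u + c := by
  have hsum : ∑ i, Real.exp ((u i + c) / τ) = (∑ i, Real.exp (u i / τ)) * Real.exp (c / τ) := by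
    simp only [add_div, Real.exp_add, Finset.sum_mul]
  have hpos : 0 < ∑ i, Real.exp (u i / τ) :=
    Finset.sum_pos (fun i _ => Real.exp_pos _) Finset.univ_nonempty
  unfold logSumExp
  rw [hsum, Real.log_mul hpos.ne' (Real.exp_pos _).ne', Real.log_exp, mul_add,
    mul_div_cancel₀ _ hτ.ne']

theorem const (hτ : 0 < τ) (c : ℝ) :
    logSumExp τ (fun _ : ι => c) = c + τ * Real.log (Fintype.card ι) := by
  have h0 : logSumExp τ (fun _ : ι => (0 : ℝ)) = τ * Real.log (Fintype.card ι) := by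
    simp [logSumExp]
  simpa [h0, add_comm] using add_const hτ (fun _ : ι => (0 : ℝ)) c

theorem le_add_of_le_add (hτ : 0 < τ) {u v : ι → ℝ} {c : ℝ} (h : ∀ i, u i ≤ v i + c) :
    logSumExp τ u ≤ logSumExp τ v + c :=
  (mono hτ h).trans_eq (add_const hτ v c)

theorem abs_sub_le (hτ : 0 < τ) {u v : ι → ℝ} {c : ℝ} (h : ∀ i, |u i - v i| ≤ c) :
    |logSumExp τ u - logSumExp τ v| ≤ c := by
  have h' i := abs_le.1 (h i)
  rw [abs_sub_le_iff]
  constructor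
  · linarith [le_add_of_le_add hτ (u := u) (v := v) (c := c) fun i => by linarith [h' i]]
  · linarith [le_add_of_le_add hτ (u := v) (v := u) (c := c) fun i => by linarith [h' i]]

theorem abs_le (hτ : 0 < τ) {u : ι → ℝ} {c : ℝ} (h : ∀ i, |u i| ≤ c) :
    |logSumExp τ u| ≤ c + τ * Real.log (Fintype.card ι) := by
  have hlog : 0 ≤ τ * Real.log (Fintype.card ι) :=
    mul_nonneg hτ.le (Real.log_nonneg (by exact_mod_cast Fintype.card_pos))
  have hdiff := abs_sub_le hτ (u := u) (v := fun _ => 0) (by simpa using h)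
  rw [const hτ, zero_add] at hdiff
  rw [_root_.abs_le] at hdiff ⊢
  constructor <;> linarith

end logSumExp

theorem abs_sum_mul_le_sum_abs_mul_norm {ι : Type*} [Fintype ι] (w V : ι → ℝ) :
    |∑ i, w i * V i| ≤ (∑ i, |w i|) * ‖V‖ :=
  calc |∑ i, w i * V i| ≤ ∑ i, |w i| * |V i| := by
        simpa only [abs_mul] using Finset.abs_sum_le_sum_abs (fun i => w i * V i) Finset.univ
    _ ≤ ∑ i, |w i| * ‖V‖ := by
        gcongr with i
        exact norm_le_pi_norm V i
    _ = (∑ i, |w i|) * ‖V‖ := (Finset.sum_mul ..).symm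

theorem abs_sum_mul_le_norm_of_stochastic {ι : Type*} [Fintype ι] {p : ι → ℝ}
    (hp0 : ∀ i, 0 ≤ p i) (hp1 : ∑ i, p i = 1) (V : ι → ℝ) :
    |∑ i, p i * V i| ≤ ‖V‖ := by
  simpa [abs_of_nonneg (hp0 _), hp1] using abs_sum_mul_le_sum_abs_mul_norm p V

theorem le_div_one_sub_of_le_add_mul {d c γ : ℝ} (hγ : γ < 1) (h : d ≤ c + γ * d) :
    d ≤ c / (1 - γ) := by
  rw [le_div_iff₀ (sub_pos.2 hγ)]
  linarith

section softBellman

variable {Θ : Type*} {r : Θ → S → A → ℝ} {P : Θ → S → A → S → ℝ} {γ τ : ℝ}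

theorem softBellman_eq_logSumExp (x : Θ) (V : S → ℝ) (s : S) :
    softBellman r P γ τ x V s = logSumExp τ (fun a => r x s a + γ * ∑ s', P x s a s' * V s') :=
  rfl

variable {x : Θ} [Nonempty A]

theorem abs_softBellman_le (hP0 : ∀ s a s', 0 ≤ P x s a s') (hP1 : ∀ s a, ∑ s', P x s a s' = 1)
    (hγ : 0 ≤ γ) (hτ : 0 < τ) {Rmax : ℝ} (hr : ∀ s a, |r x s a| ≤ Rmax) (V : S → ℝ) (s : S) :
    |softBellman r P γ τ x V s| ≤ Rmax + γ * ‖V‖ + τ * Real.log (Fintype.card A) := by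
  rw [softBellman_eq_logSumExp]
  refine logSumExp.abs_le hτ fun a => (abs_add_le _ _).trans (add_le_add (hr s a) ?_)
  rw [abs_mul, abs_of_nonneg hγ]
  exact mul_le_mul_of_nonneg_left (abs_sum_mul_le_norm_of_stochastic (hP0 s a) (hP1 s a) V) hγ

theorem norm_le_of_softBellman_fixed [Nonempty S] (hP0 : ∀ s a s', 0 ≤ P x s a s')
    (hP1 : ∀ s a, ∑ s', P x s a s' = 1) (hγ0 : 0 ≤ γ) (hγ1 : γ < 1) (hτ : 0 < τ) {Rmax : ℝ}
    (hr : ∀ s a, |r x s a| ≤ Rmax) {V : S → ℝ} (hfix : ∀ s, softBellman r P γ τ x V s = V s) :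
    ‖V‖ ≤ (Rmax + τ * Real.log (Fintype.card A)) / (1 - γ) := by
  refine le_div_one_sub_of_le_add_mul hγ1 ((pi_norm_le_iff_of_nonempty _).2 fun s => ?_)
  rw [Real.norm_eq_abs, ← hfix s]
  linarith [abs_softBellman_le hP0 hP1 hγ0 hτ hr V s]

theorem abs_softBellman_sub_softBellman_le {x₁ x₂ : Θ} {s : S}
    (hP0 : ∀ a s', 0 ≤ P x₁ s a s') (hP1 : ∀ a, ∑ s', P x₁ s a s' = 1) (hγ : 0 ≤ γ) (hτ : 0 < τ)
    {εr εP B : ℝ} (hr : ∀ a, |r x₁ s a - r x₂ s a| ≤ εr)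
    (hP : ∀ a, ∑ s', |P x₁ s a s' - P x₂ s a s'| ≤ εP) {V₁ V₂ : S → ℝ} (hV₂ : ‖V₂‖ ≤ B) :
    |softBellman r P γ τ x₁ V₁ s - softBellman r P γ τ x₂ V₂ s|
      ≤ εr + γ * (‖V₁ - V₂‖ + εP * B) := by
  rw [softBellman_eq_logSumExp, softBellman_eq_logSumExp]
  refine logSumExp.abs_sub_le hτ fun a => ?_
  have hsplit : ∑ s', P x₁ s a s' * V₁ s' - ∑ s', P x₂ s a s' * V₂ s'
      = ∑ s', P x₁ s a s' * (V₁ - V₂) s' + ∑ s', (P x₁ s a s' - P x₂ s a s') * V₂ s' := by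
    simp only [Pi.sub_apply, ← Finset.sum_sub_distrib, ← Finset.sum_add_distrib]
    exact Finset.sum_congr rfl fun s' _ => by ring
  have hcontract : |∑ s', P x₁ s a s' * (V₁ - V₂) s'| ≤ ‖V₁ - V₂‖ :=
    abs_sum_mul_le_norm_of_stochastic (hP0 a) (hP1 a) _
  have hperturb : |∑ s', (P x₁ s a s' - P x₂ s a s') * V₂ s'| ≤ εP * B :=
    calc _ ≤ (∑ s', |P x₁ s a s' - P x₂ s a s'|) * ‖V₂‖ := abs_sum_mul_le_sum_abs_mul_norm _ _
      _ ≤ εP * B := mul_le_mul (hP a) hV₂ (norm_nonneg _)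
          ((Finset.sum_nonneg fun _ _ => abs_nonneg _).trans (hP a))
  calc |(r x₁ s a + γ * ∑ s', P x₁ s a s' * V₁ s') - (r x₂ s a + γ * ∑ s', P x₂ s a s' * V₂ s')|
      = |(r x₁ s a - r x₂ s a) + γ * (∑ s', P x₁ s a s' * (V₁ - V₂) s'
          + ∑ s', (P x₁ s a s' - P x₂ s a s') * V₂ s')| := by rw [← hsplit]; ring_nf
    _ ≤ |r x₁ s a - r x₂ s a| + γ * (|∑ s', P x₁ s a s' * (V₁ - V₂) s'|
          + |∑ s', (P x₁ s a s' - P x₂ s a s') * V₂ s'|) := by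
        refine (abs_add_le _ _).trans (add_le_add_right ?_ _)
        rw [abs_mul, abs_of_nonneg hγ]
        exact mul_le_mul_of_nonneg_left (abs_add_le _ _) hγ
    _ ≤ εr + γ * (‖V₁ - V₂‖ + εP * B) :=
        add_le_add (hr a) (mul_le_mul_of_nonneg_left (add_le_add hcontract hperturb) hγ)

end softBellman

theorem soft_value_fixed_point_lipschitz_in_parameter_general
    [Nonempty S] [Nonempty A]
    (r : X → S → A → ℝ) (P : X → S → A → S → ℝ)
    (hP0 : ∀ x s a s', 0 ≤ P x s a s')
    (hP1 : ∀ x s a, ∑ s', P x s a s' = 1)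
    (γ : ℝ) (hγ0 : 0 < γ) (hγ1 : γ < 1)
    (τ : ℝ) (hτ : 0 < τ)
    (Rmax : ℝ) (hr : ∀ x s a, |r x s a| ≤ Rmax)
    (Cr CP : ℝ)
    (hrLip : ∀ x₁ x₂ s a, |r x₁ s a - r x₂ s a| ≤ Cr * ‖x₁ - x₂‖)
    (hPLip : ∀ x₁ x₂ s a, (∑ s', |P x₁ s a s' - P x₂ s a s'|) ≤ CP * ‖x₁ - x₂‖)
    (BV : ℝ) (hBV : BV = (Rmax + τ * Real.log (Fintype.card A)) / (1 - γ))
    (x₁ x₂ : X) (V₁ V₂ : S → ℝ)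
    (hfix₁ : ∀ s, softBellman r P γ τ x₁ V₁ s = V₁ s)
    (hfix₂ : ∀ s, softBellman r P γ τ x₂ V₂ s = V₂ s) :
    (⨆ s, |V₁ s - V₂ s|) ≤ ((Cr + γ * CP * BV) / (1 - γ)) * ‖x₁ - x₂‖ := by
  have hV₂ : ‖V₂‖ ≤ BV :=
    hBV ▸ norm_le_of_softBellman_fixed (hP0 x₂) (hP1 x₂) hγ0.le hγ1 hτ (hr x₂) hfix₂
  have hstep : ‖V₁ - V₂‖ ≤ (Cr + γ * CP * BV) * ‖x₁ - x₂‖ + γ * ‖V₁ - V₂‖ := by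
    refine (pi_norm_le_iff_of_nonempty _).2 fun s => ?_
    rw [Pi.sub_apply, Real.norm_eq_abs, ← hfix₁ s, ← hfix₂ s]
    refine (abs_softBellman_sub_softBellman_le (hP0 x₁ s) (hP1 x₁ s) hγ0.le hτ
      (hrLip x₁ x₂ s) (hPLip x₁ x₂ s) hV₂).trans_eq ?_
    ring
  have hnorm := le_div_one_sub_of_le_add_mul hγ1 hstep
  rw [div_mul_eq_mul_div]
  exact ciSup_le fun s => (norm_le_pi_norm (V₁ - V₂) s).trans hnorm

theorem soft_value_fixed_point_lipschitz_in_parameter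
    [Nonempty S] [Nonempty A]
    (r : X → S → A → ℝ) (P : X → S → A → S → ℝ)
    (hP0 : ∀ x s a s', 0 ≤ P x s a s')
    (hP1 : ∀ x s a, ∑ s', P x s a s' = 1)
    (γ : ℝ) (hγ0 : 0 < γ) (hγ1 : γ < 1)
    (τ : ℝ) (hτ : 0 < τ)
    (Rmax : ℝ) (hr : ∀ x s a, |r x s a| ≤ Rmax)
    (Cr CP : ℝ) (hCr : 0 ≤ Cr) (hCP : 0 ≤ CP)
    (hrLip : ∀ x₁ x₂ s a, |r x₁ s a - r x₂ s a| ≤ Cr * ‖x₁ - x₂‖)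
    (hPLip : ∀ x₁ x₂ s a, (∑ s', |P x₁ s a s' - P x₂ s a s'|) ≤ CP * ‖x₁ - x₂‖)
    (BV : ℝ) (hBV : BV = (Rmax + τ * Real.log (Fintype.card A)) / (1 - γ))
    (x₁ x₂ : X) (V₁ V₂ : S → ℝ)
    (hfix₁ : ∀ s, softBellman r P γ τ x₁ V₁ s = V₁ s)
    (hfix₂ : ∀ s, softBellman r P γ τ x₂ V₂ s = V₂ s) :
    (⨆ s, |V₁ s - V₂ s|) ≤ ((Cr + γ * CP * BV) / (1 - γ)) * ‖x₁ - x₂‖ :=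
  soft_value_fixed_point_lipschitz_in_parameter_general r P hP0 hP1 γ hγ0 hγ1 τ hτ Rmax hr Cr CP
    hrLip hPLip BV hBV x₁ x₂ V₁ V₂ hfix₁ hfix₂
end
end

section
/- For each x let V_x : S → ℝ satisfy 𝒯_x V_x = V_x, define Q_x(s,a) = r x s a + γ · ∑_{s'} P x s a s' · V_x(s'), and define the optimal soft policy π_x(s,a) = exp(Q_x(s,a)/τ) / ∑_{a'} exp(Q_x(s,a')/τ). Suppose C_Q ≥ 0 is such that ( ∑_{s,a} (Q_{x₁}(s,a) − Q_{x₂}(s,a))² )^{1/2} ≤ C_Q · ‖x₁ − x₂‖ for all x₁, x₂. Then ( ∑_{s,a} (π_{x₁}(s,a) − π_{x₂}(s,a))² )^{1/2} ≤ (C_Q / (2τ)) · ‖x₁ − x₂‖ for all x₁, x₂. -/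
open scoped BigOperators

noncomputable section

variable {S A X : Type*} [Fintype S] [Fintype A]
  [NormedAddCommGroup X] [NormedSpace ℝ X]

/-!
The Jacobian of the softmax map at a point with softmax value `p` is `diag p - p pᵀ`, the
covariance form of the probability vector `p`. By Popoviciu's inequality a variance under `p`
is at most `(max v - min v)² / 4 ≤ ‖v‖² / 2`, so by Cauchy–Schwarz every directional derivative
of `⟪e, softmax⟫` in direction `δ` is at most `‖e‖ ‖δ‖ / 2`. The mean value theorem with
`e = softmax z - softmax w` then gives `‖softmax z - softmax w‖ ≤ ‖z - w‖ / 2`; applying this to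
`Q x s / τ` state by state and summing over states yields the constant `C_Q / (2τ)`.
-/

open Finset

def softmax {ι : Type*} [Fintype ι] (z : ι → ℝ) (a : ι) : ℝ :=
  Real.exp (z a) / ∑ b, Real.exp (z b)

section WeightedMoments

variable {ι : Type*} [Fintype ι] {p : ι → ℝ}

theorem sum_mul_sub_mean_sq_le_sum_mul_sub_sq (hp1 : ∑ a, p a = 1) (v : ι → ℝ) (c : ℝ) :
    ∑ a, p a * (v a - ∑ b, p b * v b) ^ 2 ≤ ∑ a, p a * (v a - c) ^ 2 := by
  set μ := ∑ b, p b * v b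
  have hsplit : ∑ a, p a * (v a - c) ^ 2 = ∑ a, p a * (v a - μ) ^ 2 + (μ - c) ^ 2 := by
    have hterm : ∀ a, p a * (v a - c) ^ 2 = p a * (v a - μ) ^ 2
        + ((μ - c) ^ 2 - 2 * (μ - c) * μ) * p a + 2 * (μ - c) * (p a * v a) := fun a => by ring
    simp only [hterm, sum_add_distrib, ← mul_sum, hp1]
    ring
  rw [hsplit]
  exact le_add_of_nonneg_right (sq_nonneg _)

theorem sq_sub_le_two_mul_sum_sq (v : ι → ℝ) (a b : ι) :
    (v a - v b) ^ 2 ≤ 2 * ∑ c, v c ^ 2 := by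
  classical
  by_cases hab : a = b
  · subst hab
    simpa using sum_nonneg fun c _ => sq_nonneg (v c)
  · have hpair : v a ^ 2 + v b ^ 2 ≤ ∑ c, v c ^ 2 := by
      rw [← sum_pair (f := fun c => v c ^ 2) hab]
      exact sum_le_univ_sum_of_nonneg fun c => sq_nonneg (v c)
    nlinarith [sq_nonneg (v a + v b)]

theorem sum_mul_sub_mean_sq_le_half_sum_sq [Nonempty ι] (hp0 : ∀ a, 0 ≤ p a)
    (hp1 : ∑ a, p a = 1) (v : ι → ℝ) :
    ∑ a, p a * (v a - ∑ b, p b * v b) ^ 2 ≤ (∑ a, v a ^ 2) / 2 := by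
  obtain ⟨aM, hM⟩ := Finite.exists_max v
  obtain ⟨am, hm⟩ := Finite.exists_min v
  have hmidrange : ∀ a, (v a - (v aM + v am) / 2) ^ 2 ≤ ((v aM - v am) / 2) ^ 2 := fun a =>
    sq_le_sq' (by linarith [hm a]) (by linarith [hM a])
  calc ∑ a, p a * (v a - ∑ b, p b * v b) ^ 2
      ≤ ∑ a, p a * (v a - (v aM + v am) / 2) ^ 2 :=
        sum_mul_sub_mean_sq_le_sum_mul_sub_sq hp1 v _
    _ ≤ ∑ a, p a * ((v aM - v am) / 2) ^ 2 :=
        sum_le_sum fun a _ => mul_le_mul_of_nonneg_left (hmidrange a) (hp0 a)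
    _ = (v aM - v am) ^ 2 / 4 := by rw [← sum_mul, hp1]; ring
    _ ≤ (∑ a, v a ^ 2) / 2 := by linarith [sq_sub_le_two_mul_sum_sq v aM am]

theorem sq_sum_mul_mul_sub_mean_le [Nonempty ι] (hp0 : ∀ a, 0 ≤ p a) (hp1 : ∑ a, p a = 1)
    (e u : ι → ℝ) :
    (∑ a, p a * e a * (u a - ∑ b, p b * u b)) ^ 2 ≤ (∑ a, e a ^ 2) * (∑ a, u a ^ 2) / 4 := by
  set ē := ∑ b, p b * e b
  set ū := ∑ b, p b * u b
  -- Centering `e` costs nothing since `∑ p (u - ū) = 0`.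
  have hcenter : ∑ a, p a * e a * (u a - ū) = ∑ a, p a * (e a - ē) * (u a - ū) := by
    have hzero : ∑ a, p a * (u a - ū) = 0 := by
      simp only [mul_sub, sum_sub_distrib, ← sum_mul, hp1]
      ring
    have hterm : ∀ a, p a * (e a - ē) * (u a - ū)
        = p a * e a * (u a - ū) - ē * (p a * (u a - ū)) := fun a => by ring
    simp only [hterm, sum_sub_distrib, ← mul_sum, hzero, mul_zero, sub_zero]
  have hvar_e := sum_mul_sub_mean_sq_le_half_sum_sq hp0 hp1 e
  have hvar_u := sum_mul_sub_mean_sq_le_half_sum_sq hp0 hp1 u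
  have hcs : (∑ a, p a * (e a - ē) * (u a - ū)) ^ 2
      ≤ (∑ a, p a * (e a - ē) ^ 2) * ∑ a, p a * (u a - ū) ^ 2 :=
    sum_sq_le_sum_mul_sum_of_sq_le_mul _ (fun a _ => mul_nonneg (hp0 a) (sq_nonneg _))
      (fun a _ => mul_nonneg (hp0 a) (sq_nonneg _)) (fun a _ => (by ring : _ = _).le)
  rw [hcenter]
  refine hcs.trans ?_
  calc (∑ a, p a * (e a - ē) ^ 2) * ∑ a, p a * (u a - ū) ^ 2
      ≤ ((∑ a, e a ^ 2) / 2) * ((∑ a, u a ^ 2) / 2) :=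
        mul_le_mul hvar_e hvar_u (sum_nonneg fun a _ => mul_nonneg (hp0 a) (sq_nonneg _))
          (div_nonneg (sum_nonneg fun a _ => sq_nonneg _) zero_le_two)
    _ = (∑ a, e a ^ 2) * (∑ a, u a ^ 2) / 4 := by ring

end WeightedMoments

section Softmax

variable {ι : Type*} [Fintype ι]

theorem softmax_nonneg (z : ι → ℝ) (a : ι) : 0 ≤ softmax z a :=
  div_nonneg (Real.exp_pos _).le (sum_nonneg fun _ _ => (Real.exp_pos _).le)

theorem sum_softmax [Nonempty ι] (z : ι → ℝ) : ∑ a, softmax z a = 1 := by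
  unfold softmax
  rw [← sum_div, div_self (sum_pos (fun _ _ => Real.exp_pos _) univ_nonempty).ne']

theorem hasDerivAt_softmax_add_smul [Nonempty ι] (w δ : ι → ℝ) (a : ι) (t : ℝ) :
    HasDerivAt (fun t : ℝ => softmax (w + t • δ) a)
      (softmax (w + t • δ) a * (δ a - ∑ b, softmax (w + t • δ) b * δ b)) t := by
  have hexp : ∀ b, HasDerivAt (fun t : ℝ => Real.exp ((w + t • δ) b))
      (Real.exp ((w + t • δ) b) * δ b) t := fun b => by
    simpa using (((hasDerivAt_id t).mul_const (δ b)).const_add (w b)).exp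
  have hden : 0 < ∑ b, Real.exp ((w + t • δ) b) :=
    sum_pos (fun _ _ => Real.exp_pos _) univ_nonempty
  refine ((hexp a).div (HasDerivAt.fun_sum fun b _ => hexp b) hden.ne').congr_deriv ?_
  simp only [softmax, div_mul_eq_mul_div, ← sum_div]
  field_simp

theorem sq_sum_mul_softmax_sub_le [Nonempty ι] (z w e : ι → ℝ) :
    (∑ a, e a * (softmax z a - softmax w a)) ^ 2
      ≤ (∑ a, e a ^ 2) * (∑ a, (z a - w a) ^ 2) / 4 := by
  set δ := z - w
  set p : ℝ → ι → ℝ := fun t => softmax (w + t • δ)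
  have hderiv : ∀ t, HasDerivAt (fun t => ∑ a, e a * p t a)
      (∑ a, p t a * e a * (δ a - ∑ b, p t b * δ b)) t := fun t => by
    refine (HasDerivAt.fun_sum fun a _ =>
      (hasDerivAt_softmax_add_smul w δ a t).const_mul (e a)).congr_deriv ?_
    exact sum_congr rfl fun a _ => by ring
  obtain ⟨c, -, hc⟩ := exists_hasDerivAt_eq_slope (fun t => ∑ a, e a * p t a) _ zero_lt_one
    (fun t _ => (hderiv t).continuousAt.continuousWithinAt) (fun t _ => hderiv t)
  have hp1 : p 1 = softmax z := by simp [p, δ]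
  have hp0 : p 0 = softmax w := by simp [p]
  have hslope : ∑ a, e a * (softmax z a - softmax w a)
      = ∑ a, p c a * e a * (δ a - ∑ b, p c b * δ b) := by
    rw [hc, hp1, hp0, sub_zero, div_one, ← sum_sub_distrib]
    simp only [mul_sub]
  rw [hslope]
  exact sq_sum_mul_mul_sub_mean_le (softmax_nonneg _) (sum_softmax _) e δ

theorem sum_sq_softmax_sub_le [Nonempty ι] (z w : ι → ℝ) :
    ∑ a, (softmax z a - softmax w a) ^ 2 ≤ (∑ a, (z a - w a) ^ 2) / 4 := by
  have hpaired := sq_sum_mul_softmax_sub_le z w (fun a => softmax z a - softmax w a)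
  simp only [← sq] at hpaired
  have hD : 0 ≤ ∑ a, (softmax z a - softmax w a) ^ 2 := sum_nonneg fun _ _ => sq_nonneg _
  have hU : 0 ≤ ∑ a, (z a - w a) ^ 2 := sum_nonneg fun _ _ => sq_nonneg _
  nlinarith

end Softmax

theorem soft_optimal_policy_lipschitz_in_parameter_general
    [Nonempty A]
    (τ : ℝ) (hτ : 0 < τ)
    (Q : X → S → A → ℝ)
    (π : X → S → A → ℝ)
    (hπ : ∀ x s a,
      π x s a = Real.exp (Q x s a / τ) / ∑ a', Real.exp (Q x s a' / τ))
    (CQ : ℝ)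
    (hQLip : ∀ x₁ x₂ : X,
      Real.sqrt (∑ s, ∑ a, (Q x₁ s a - Q x₂ s a) ^ 2) ≤ CQ * ‖x₁ - x₂‖) :
    ∀ x₁ x₂ : X,
      Real.sqrt (∑ s, ∑ a, (π x₁ s a - π x₂ s a) ^ 2) ≤
        (CQ / (2 * τ)) * ‖x₁ - x₂‖ := by
  intro x₁ x₂
  have hπ_softmax : ∀ x s, π x s = softmax fun a => Q x s a / τ := fun x s => funext (hπ x s)
  have hstate : ∀ s, ∑ a, (π x₁ s a - π x₂ s a) ^ 2
      ≤ (1 / (2 * τ)) ^ 2 * ∑ a, (Q x₁ s a - Q x₂ s a) ^ 2 := fun s => by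
    rw [hπ_softmax, hπ_softmax]
    refine (sum_sq_softmax_sub_le _ _).trans_eq ?_
    rw [mul_sum, sum_div]
    refine sum_congr rfl fun a _ => ?_
    field_simp
    ring
  calc Real.sqrt (∑ s, ∑ a, (π x₁ s a - π x₂ s a) ^ 2)
      ≤ Real.sqrt ((1 / (2 * τ)) ^ 2 * ∑ s, ∑ a, (Q x₁ s a - Q x₂ s a) ^ 2) := by
        rw [mul_sum]
        exact Real.sqrt_le_sqrt (sum_le_sum fun s _ => hstate s)
    _ = 1 / (2 * τ) * Real.sqrt (∑ s, ∑ a, (Q x₁ s a - Q x₂ s a) ^ 2) := by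
        rw [Real.sqrt_mul (sq_nonneg _), Real.sqrt_sq (by positivity)]
    _ ≤ 1 / (2 * τ) * (CQ * ‖x₁ - x₂‖) := by gcongr; exact hQLip x₁ x₂
    _ = CQ / (2 * τ) * ‖x₁ - x₂‖ := by ring

theorem soft_optimal_policy_lipschitz_in_parameter
    [Nonempty S] [Nonempty A]
    (r : X → S → A → ℝ) (P : X → S → A → S → ℝ)
    (hP0 : ∀ x s a s', 0 ≤ P x s a s')
    (hP1 : ∀ x s a, ∑ s', P x s a s' = 1)
    (γ : ℝ) (hγ0 : 0 < γ) (hγ1 : γ < 1)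
    (τ : ℝ) (hτ : 0 < τ)
    (V : X → S → ℝ)
    (hfix : ∀ x s, softBellman r P γ τ x (V x) s = V x s)
    (Q : X → S → A → ℝ)
    (hQ : ∀ x s a, Q x s a = r x s a + γ * ∑ s', P x s a s' * V x s')
    (π : X → S → A → ℝ)
    (hπ : ∀ x s a,
      π x s a = Real.exp (Q x s a / τ) / ∑ a', Real.exp (Q x s a' / τ))
    (CQ : ℝ) (hCQ : 0 ≤ CQ)
    (hQLip : ∀ x₁ x₂ : X,
      Real.sqrt (∑ s, ∑ a, (Q x₁ s a - Q x₂ s a) ^ 2) ≤ CQ * ‖x₁ - x₂‖) :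
    ∀ x₁ x₂ : X,
      Real.sqrt (∑ s, ∑ a, (π x₁ s a - π x₂ s a) ^ 2) ≤
        (CQ / (2 * τ)) * ‖x₁ - x₂‖ :=
  soft_optimal_policy_lipschitz_in_parameter_general τ hτ Q π hπ CQ hQLip
end
end

section
/- Let δ ∈ (0,1] and let π₁, π₂ : S → A → ℝ satisfy π₁ s a ≥ δ and π₂ s a ≥ δ for all s, a. Then the infimum over all c : S → ℝ of ( ∑_{s,a} ( log(π₁ s a) − log(π₂ s a) + c s )² )^{1/2} is at most (1/δ) · ( ∑_{s,a} (π₁ s a − π₂ s a)² )^{1/2}. In particular, the Euclidean distance between the sets {(log π₁ s a + c s)_{s,a} : c : S → ℝ} and {(log π₂ s a + c s)_{s,a} : c : S → ℝ} of softmax parameters inducing π₁ and π₂ is at most (1/δ) times the Euclidean distance between π₁ and π₂. -/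
open scoped BigOperators

noncomputable section

/-- The set of softmax parameters (up to per-state shifts) that induce the
policy `π`, regarded as vectors indexed by `S × A`. -/
def paramSet {S A : Type*} (π : S → A → ℝ) : Set (S × A → ℝ) :=
  {u | ∃ c : S → ℝ, u = fun p => Real.log (π p.1 p.2) + c p.1}

lemma log_lipschitz_aux {δ x y : ℝ} (hδ : 0 < δ) (hx : δ ≤ x) (hy : δ ≤ y)
    (hxy : y ≤ x) : Real.log x - Real.log y ≤ (x - y) / δ := by
  have hy0 : 0 < y := lt_of_lt_of_le hδ hy
  have hx0 : 0 < x := lt_of_lt_of_le hδ hx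
  have h1 : Real.log x - Real.log y = Real.log (x / y) := (Real.log_div hx0.ne' hy0.ne').symm
  have h2 : Real.log (x / y) ≤ x / y - 1 := Real.log_le_sub_one_of_pos (by positivity)
  have h3 : x / y - 1 = (x - y) / y := by field_simp
  have h4 : (x - y) / y ≤ (x - y) / δ :=
    div_le_div_of_nonneg_left (by linarith) hδ hy
  linarith

lemma abs_log_sub_log_le {δ x y : ℝ} (hδ : 0 < δ) (hx : δ ≤ x) (hy : δ ≤ y) :
    |Real.log x - Real.log y| ≤ |x - y| / δ := by
  rcases le_total y x with h | h
  · rw [abs_of_nonneg (sub_nonneg.2 (Real.log_le_log (lt_of_lt_of_le hδ hy) h)),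
      abs_of_nonneg (sub_nonneg.2 h)]
    exact log_lipschitz_aux hδ hx hy h
  · rw [abs_of_nonpos (sub_nonpos.2 (Real.log_le_log (lt_of_lt_of_le hδ hx) h)),
      abs_of_nonpos (sub_nonpos.2 h), neg_sub, neg_sub]
    exact log_lipschitz_aux hδ hy hx h

lemma key_bound {S A : Type*} [Fintype S] [Fintype A]
    {δ : ℝ} (hδ0 : 0 < δ) (π₁ π₂ : S → A → ℝ)
    (hπ₁ : ∀ s a, δ ≤ π₁ s a) (hπ₂ : ∀ s a, δ ≤ π₂ s a) :
    Real.sqrt (∑ s, ∑ a, (Real.log (π₁ s a) - Real.log (π₂ s a)) ^ 2) ≤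
      (1 / δ) * Real.sqrt (∑ s, ∑ a, (π₁ s a - π₂ s a) ^ 2) := by
  have hsum : (∑ s, ∑ a, (Real.log (π₁ s a) - Real.log (π₂ s a)) ^ 2) ≤
      (1 / δ) ^ 2 * ∑ s, ∑ a, (π₁ s a - π₂ s a) ^ 2 := by
    rw [Finset.mul_sum]
    refine Finset.sum_le_sum fun s _ => ?_
    rw [Finset.mul_sum]
    refine Finset.sum_le_sum fun a _ => ?_
    have h := abs_log_sub_log_le hδ0 (hπ₁ s a) (hπ₂ s a)
    have h2 : |Real.log (π₁ s a) - Real.log (π₂ s a)| ^ 2 ≤ (|π₁ s a - π₂ s a| / δ) ^ 2 :=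
      pow_le_pow_left₀ (abs_nonneg _) h 2
    calc (Real.log (π₁ s a) - Real.log (π₂ s a)) ^ 2
        = |Real.log (π₁ s a) - Real.log (π₂ s a)| ^ 2 := (sq_abs _).symm
      _ ≤ (|π₁ s a - π₂ s a| / δ) ^ 2 := h2
      _ = (1 / δ) ^ 2 * (π₁ s a - π₂ s a) ^ 2 := by
          rw [div_pow, sq_abs]; ring
  calc Real.sqrt (∑ s, ∑ a, (Real.log (π₁ s a) - Real.log (π₂ s a)) ^ 2)
      ≤ Real.sqrt ((1 / δ) ^ 2 * ∑ s, ∑ a, (π₁ s a - π₂ s a) ^ 2) := Real.sqrt_le_sqrt hsum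
    _ = (1 / δ) * Real.sqrt (∑ s, ∑ a, (π₁ s a - π₂ s a) ^ 2) := by
        rw [Real.sqrt_mul (by positivity), Real.sqrt_sq (by positivity)]

theorem softmax_parameter_distance_le
    {S A : Type*} [Fintype S] [Fintype A] [Nonempty S] [Nonempty A]
    (δ : ℝ) (hδ0 : 0 < δ) (hδ1 : δ ≤ 1)
    (π₁ π₂ : S → A → ℝ)
    (hπ₁ : ∀ s a, δ ≤ π₁ s a) (hπ₂ : ∀ s a, δ ≤ π₂ s a) :
    ((⨅ c : S → ℝ, Real.sqrt (∑ s, ∑ a,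
        (Real.log (π₁ s a) - Real.log (π₂ s a) + c s) ^ 2)) ≤
      (1 / δ) * Real.sqrt (∑ s, ∑ a, (π₁ s a - π₂ s a) ^ 2)) ∧
    ((⨅ u : paramSet π₁, ⨅ w : paramSet π₂,
        Real.sqrt (∑ s, ∑ a, (u.1 (s, a) - w.1 (s, a)) ^ 2)) ≤
      (1 / δ) * Real.sqrt (∑ s, ∑ a, (π₁ s a - π₂ s a) ^ 2)) := by
  have hkey := key_bound hδ0 π₁ π₂ hπ₁ hπ₂
  constructor
  · refine ciInf_le_of_le ⟨0, ?_⟩ (0 : S → ℝ) ?_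
    · rintro x ⟨c, rfl⟩; positivity
    · simpa using hkey
  · have hu : (fun p : S × A => Real.log (π₁ p.1 p.2) + (0 : ℝ)) ∈ paramSet π₁ :=
      ⟨fun _ => 0, rfl⟩
    have hw : (fun p : S × A => Real.log (π₂ p.1 p.2) + (0 : ℝ)) ∈ paramSet π₂ :=
      ⟨fun _ => 0, rfl⟩
    refine ciInf_le_of_le ⟨0, ?_⟩ ⟨_, hu⟩ ?_
    · rintro x ⟨u, rfl⟩
      exact Real.iInf_nonneg fun w => Real.sqrt_nonneg _
    · refine ciInf_le_of_le ⟨0, ?_⟩ ⟨_, hw⟩ ?_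
      · rintro x ⟨w, rfl⟩; positivity
      · simpa using hkey
end
end
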